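/- arXiv:2110.02779 — 4 statements merged into one kernel-verified Lean document; each statement's English description precedes it below -/
import Mathlib

section
/- Let η ∈ (0,1), ℓ, m, N ∈ ℕ with m ≥ 2/η, and δ = 2^{−ℓmN}. Let B′ ⊂ [0,1) be a δ-set which is (m, ℓN)-uniform and (η/2, ℓm, N)-polarised. Then there exists a subset B″ ⊂ B′ which is (m, ℓN)-uniform and (η, ℓm, N)-polarised, with |B″| ≥ δ^{η/2} |B′|, and which satisfies the following separation property: for every s ∈ {0,…,ℓN−1}, if I₁ ≠ I₂ are distinct dyadic intervals of length 2^{−ms} intersecting B″, then dist(I₁, I₂) ≥ 2^{−ms}. -/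
open MeasureTheory Set Pointwise

/-- The dyadic interval of scale `r > 0` with index `k`, i.e. `[k·r, (k+1)·r)`. -/
def dyI (r : ℝ) (k : ℤ) : Set ℝ := Set.Ico ((k : ℝ) * r) (((k : ℝ) + 1) * r)

/-- The covering number `|E|_r`: the number of dyadic intervals of side length `r`
needed to cover `E` (equivalently, meeting `E`). -/
noncomputable def cov (r : ℝ) (E : Set ℝ) : ℕ := Nat.card {k : ℤ | (E ∩ dyI r k).Nonempty}

/-- The lattice `δ·ℤ`. -/
def lat (δ : ℝ) : Set ℝ := {x : ℝ | ∃ z : ℤ, x = δ * (z : ℝ)}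

/-- `A` is `(m, N)`-uniform with branching numbers `R`. -/
def uniform (m N : ℕ) (A : Set ℝ) (R : ℕ → ℕ) : Prop :=
  ∀ s : ℕ, s < N → ∀ k : ℤ, (A ∩ dyI ((2:ℝ) ^ (-(m * s : ℤ))) k).Nonempty →
    cov ((2:ℝ) ^ (-(m * (s + 1) : ℤ))) (A ∩ dyI ((2:ℝ) ^ (-(m * s : ℤ))) k) = R s

/-- `(η, m, N)`-polarisation for branching numbers `RA`, `RB`. A single set `B` with
branching numbers `R` is `(η,m,N)`-polarised iff `polarised η m N R R`. -/
def polarised (η : ℝ) (m N : ℕ) (RA RB : ℕ → ℕ) : Prop :=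
  ∀ s : ℕ, s < N → 1 < RB s → (2:ℝ) ^ ((1 - η) * (m : ℝ)) ≤ (RA s : ℝ)

/-!
Prune the tree of dyadic intervals of `B′` at the scales `2^{-mt}`: among the children of each
node, listed from left to right, keep only those of odd rank (the 1st, 3rd, 5th, …). Every node
then keeps `⌈R/2⌉` of its `R` children, so uniformity survives with branching numbers
`⌈R₁/2⌉`; the cardinality drops by a factor at most `2^{ℓN} ≤ δ^{-η/2}` and each branching
number at scale `2^{-ℓm}` by a factor at most `2^ℓ ≤ 2^{ηℓm/2}` (both because `mη ≥ 2`), which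
turns `(η/2)`-polarisation into `η`-polarisation. Kept siblings are never adjacent, and this gap
of one interval is inherited by all their descendants, which gives the separation.
-/

noncomputable def dyIdx (n : ℕ) (x : ℝ) : ℤ := ⌊x * 2 ^ n⌋

lemma mem_dyI_iff_dyIdx {n : ℕ} {x : ℝ} {k : ℤ} :
    x ∈ dyI ((2:ℝ) ^ (-(n:ℤ))) k ↔ dyIdx n x = k := by
  have h2n : (0:ℝ) < 2 ^ n := by positivity
  rw [dyI, mem_Ico, zpow_neg, zpow_natCast, ← div_eq_mul_inv, ← div_eq_mul_inv,
    div_le_iff₀ h2n, lt_div_iff₀ h2n, dyIdx, Int.floor_eq_iff]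

lemma inter_dyI_eq (A : Set ℝ) (n : ℕ) (k : ℤ) :
    A ∩ dyI ((2:ℝ) ^ (-(n:ℤ))) k = {x ∈ A | dyIdx n x = k} := by
  ext x
  simp only [mem_inter_iff, mem_dyI_iff_dyIdx, mem_ofPred_eq]

lemma cov_eq_ncard_image_dyIdx (n : ℕ) (E : Set ℝ) :
    cov ((2:ℝ) ^ (-(n:ℤ))) E = (dyIdx n '' E).ncard := by
  have : {k : ℤ | (E ∩ dyI ((2:ℝ) ^ (-(n:ℤ))) k).Nonempty} = dyIdx n '' E := by
    ext k
    simp only [inter_dyI_eq, mem_ofPred_eq, mem_image, Set.Nonempty]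
  rw [cov, this, Nat.card_coe_set_eq]

lemma dyIdx_eq_ediv (n d : ℕ) (x : ℝ) : dyIdx n x = dyIdx (n + d) x / 2 ^ d := by
  have h : x * 2 ^ n = x * 2 ^ (n + d) / ((2 ^ d : ℕ) : ℝ) := by
    push_cast
    rw [pow_add, ← mul_assoc, mul_div_cancel_right₀ _ (by positivity)]
  rw [dyIdx, dyIdx, h, Int.floor_div_natCast]
  push_cast
  rfl

lemma dyIdx_eq_of_le {n n' : ℕ} (h : n ≤ n') {x y : ℝ} (hxy : dyIdx n' x = dyIdx n' y) :
    dyIdx n x = dyIdx n y := by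
  obtain ⟨d, rfl⟩ := Nat.exists_eq_add_of_le h
  rw [dyIdx_eq_ediv n d x, dyIdx_eq_ediv n d y, hxy]

lemma dyIdx_parent (m t : ℕ) (x : ℝ) : dyIdx (m * t) x = dyIdx (m * (t + 1)) x / 2 ^ m := by
  rw [mul_add_one]
  exact dyIdx_eq_ediv _ _ x

lemma dyIdx_zero {x : ℝ} (hx : x ∈ Ico (0:ℝ) 1) : dyIdx 0 x = 0 := by
  rw [dyIdx, pow_zero, mul_one, Int.floor_eq_zero_iff]
  exact hx

lemma dyIdx_zpow_mul (n : ℕ) (z : ℤ) : dyIdx n ((2:ℝ) ^ (-(n:ℤ)) * z) = z := by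
  rw [dyIdx, mul_right_comm, zpow_neg, zpow_natCast, inv_mul_cancel₀ (by positivity), one_mul,
    Int.floor_intCast]

lemma add_two_le_of_ediv_add_two_le {a b c : ℤ} (hc : 0 < c) (h : a / c + 2 ≤ b / c) :
    a + 2 ≤ b := by
  have ha := Int.lt_ediv_add_one_mul_self a hc
  have hb := Int.ediv_mul_le b hc.ne'
  nlinarith

lemma le_abs_sub_of_mem_dyI {r x y : ℝ} {k₁ k₂ : ℤ} (hk : k₁ + 2 ≤ k₂)
    (hx : x ∈ dyI r k₁) (hy : y ∈ dyI r k₂) (hr : 0 ≤ r) : r ≤ |x - y| := by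
  have hk' : ((k₁ : ℝ) + 2) * r ≤ k₂ * r := mul_le_mul_of_nonneg_right (by exact_mod_cast hk) hr
  rw [abs_sub_comm]
  exact le_abs.mpr (Or.inl (by linarith [hx.2, hy.1]))

lemma lat_inter_Ico_finite {δ : ℝ} (hδ : 0 < δ) : (lat δ ∩ Ico 0 1).Finite := by
  refine ((finite_Icc (0:ℤ) ⌈δ⁻¹⌉).image (fun z : ℤ => δ * z)).subset ?_
  rintro x ⟨⟨z, rfl⟩, hx0, hx1⟩
  refine ⟨z, ⟨?_, ?_⟩, rfl⟩
  · exact_mod_cast (mul_nonneg_iff_of_pos_left hδ).mp hx0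
  · have : (z : ℝ) ≤ δ⁻¹ := by rw [← one_div, le_div_iff₀ hδ]; linarith [mul_comm (z : ℝ) δ]
    exact_mod_cast this.trans (Int.le_ceil _)

def OddRank (C : Set ℤ) (j : ℤ) : Prop := Odd (C ∩ Iic j).ncard

lemma Finset.card_filter_odd_card_filter_le {α : Type*} [LinearOrder α] (s : Finset α) :
    (s.filter fun j => Odd (s.filter (· ≤ j)).card).card = (s.card + 1) / 2 := by
  classical
  induction s using Finset.induction_on_max with
  | empty => simp
  | insert a s hlt ih =>
    have ha : a ∉ s := fun h => (hlt a h).false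
    have hbelow : ∀ j ∈ s, (insert a s).filter (· ≤ j) = s.filter (· ≤ j) := fun j hj => by
      rw [Finset.filter_insert, if_neg (not_le.mpr (hlt j hj))]
    have htop : (insert a s).filter (· ≤ a) = insert a s :=
      Finset.filter_true_of_mem fun j hj => by
        rcases Finset.mem_insert.mp hj with rfl | hj
        exacts [le_rfl, (hlt j hj).le]
    rw [Finset.filter_insert, htop, Finset.filter_congr (fun j hj => by rw [hbelow j hj]),
      Finset.card_insert_of_notMem ha]
    split_ifs with hodd <;> rw [Nat.odd_iff] at hodd
    · rw [Finset.card_insert_of_notMem (by simp [ha]), ih]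
      omega
    · rw [ih]
      omega

lemma ncard_setOf_oddRank {C : Set ℤ} (hC : C.Finite) :
    {j ∈ C | OddRank C j}.ncard = (C.ncard + 1) / 2 := by
  classical
  obtain ⟨s, rfl⟩ := hC.exists_finset_coe
  have hsel : {j ∈ (s : Set ℤ) | OddRank s j} =
      ↑(s.filter fun j => Odd (s.filter (· ≤ j)).card) := by
    ext j
    have hIic : (s : Set ℤ) ∩ Iic j = ↑(s.filter (· ≤ j)) := by ext; simp
    simp only [mem_ofPred_eq, Finset.mem_coe, Finset.mem_filter, OddRank, hIic, ncard_coe_finset]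
  rw [hsel, ncard_coe_finset, ncard_coe_finset, Finset.card_filter_odd_card_filter_le]

lemma exists_oddRank {C : Set ℤ} (hC : C.Finite) (hne : C.Nonempty) : ∃ j ∈ C, OddRank C j := by
  have hpos : 0 < {j ∈ C | OddRank C j}.ncard := by
    rw [ncard_setOf_oddRank hC]
    have := (ncard_pos hC).mpr hne
    omega
  exact (nonempty_of_ncard_ne_zero hpos.ne').imp fun _ h => h

lemma OddRank.add_two_le {C : Set ℤ} {j j' : ℤ} (hj : OddRank C j) (hj' : OddRank C j')
    (hj'C : j' ∈ C) (hlt : j < j') : j + 2 ≤ j' := by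
  by_contra! hcon
  obtain rfl : j' = j + 1 := by omega
  have hfin : (C ∩ Iic j).Finite := finite_of_ncard_pos hj.pos
  have hins : C ∩ Iic (j + 1) = insert (j + 1) (C ∩ Iic j) := by
    ext i
    simp only [mem_inter_iff, mem_Iic, mem_insert_iff]
    constructor
    · rintro ⟨hi, hij⟩
      rcases eq_or_lt_of_le hij with rfl | hij
      exacts [Or.inl rfl, Or.inr ⟨hi, by omega⟩]
    · rintro (rfl | ⟨hi, hij⟩)
      exacts [⟨hj'C, le_rfl⟩, ⟨hi, by omega⟩]
  rw [OddRank, hins, ncard_insert_of_notMem (fun h => by simp at h) hfin] at hj'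
  exact Nat.not_odd_iff_even.mpr hj.add_one hj'

lemma uniform_iff {m N : ℕ} {A : Set ℝ} {R : ℕ → ℕ} :
    uniform m N A R ↔ ∀ s < N, ∀ k : ℤ, {x ∈ A | dyIdx (m * s) x = k}.Nonempty →
      (dyIdx (m * (s + 1)) '' {x ∈ A | dyIdx (m * s) x = k}).ncard = R s := by
  simp only [uniform, ← Nat.cast_add_one, ← Nat.cast_mul, inter_dyI_eq, cov_eq_ncard_image_dyIdx]

lemma uniform_branching_eq {m N : ℕ} {A : Set ℝ} {R R' : ℕ → ℕ} (hA : A.Nonempty)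
    (h : uniform m N A R) (h' : uniform m N A R') {s : ℕ} (hs : s < N) : R s = R' s := by
  obtain ⟨x, hx⟩ := hA
  rw [uniform_iff] at h h'
  rw [← h s hs _ ⟨x, hx, rfl⟩, h' s hs _ ⟨x, hx, rfl⟩]

lemma Set.ncard_eq_ncard_image_mul {α β : Type*} {s : Set α} (hs : s.Finite) (f : α → β) {c : ℕ}
    (hfib : ∀ b ∈ f '' s, {a ∈ s | f a = b}.ncard = c) : s.ncard = (f '' s).ncard * c := by
  classical
  obtain ⟨s, rfl⟩ := hs.exists_finset_coe
  rw [← Finset.coe_image, ncard_coe_finset, ncard_coe_finset, Finset.card_eq_sum_card_image f s,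
    Finset.sum_const_nat fun b hb => ?_]
  rw [← hfib b (by simpa using hb), ← ncard_coe_finset, Finset.coe_filter]
  rfl

lemma ncard_image_dyIdx_eq_prod {m L : ℕ} {E : Set ℝ} {R : ℕ → ℕ} (hE : E.Finite)
    (hu : uniform m L E R) {t t' : ℕ} (htt' : t ≤ t') (ht'L : t' ≤ L) {k : ℤ}
    (hk : {x ∈ E | dyIdx (m * t) x = k}.Nonempty) :
    (dyIdx (m * t') '' {x ∈ E | dyIdx (m * t) x = k}).ncard = ∏ u ∈ Finset.Ico t t', R u := by
  rw [uniform_iff] at hu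
  induction t', htt' using Nat.le_induction with
  | base =>
    have : dyIdx (m * t) '' {x ∈ E | dyIdx (m * t) x = k} = {k} :=
      (eq_singleton_iff_nonempty_unique_mem).mpr ⟨hk.image _, by rintro _ ⟨x, hx, rfl⟩; exact hx.2⟩
    rw [this, ncard_singleton, Finset.Ico_self, Finset.prod_empty]
  | succ t' htt' ih =>
    set C := {x ∈ E | dyIdx (m * t) x = k}
    have hparent : (· / 2 ^ m) '' (dyIdx (m * (t' + 1)) '' C) = dyIdx (m * t') '' C := by
      rw [image_image]
      simp only [← dyIdx_parent]
    have hfiber : ∀ j ∈ (· / 2 ^ m) '' (dyIdx (m * (t' + 1)) '' C),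
        {i ∈ dyIdx (m * (t' + 1)) '' C | i / 2 ^ m = j}.ncard = R t' := by
      rw [hparent]
      rintro j ⟨y, hyC, rfl⟩
      have hcell : {i ∈ dyIdx (m * (t' + 1)) '' C | i / 2 ^ m = dyIdx (m * t') y} =
          dyIdx (m * (t' + 1)) '' {x ∈ E | dyIdx (m * t') x = dyIdx (m * t') y} := by
        ext i
        simp only [mem_ofPred_eq, mem_image, C]
        constructor
        · rintro ⟨⟨x, ⟨hxE, -⟩, rfl⟩, hxy⟩
          exact ⟨x, ⟨hxE, by rw [dyIdx_parent, hxy]⟩, rfl⟩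
        · rintro ⟨x, ⟨hxE, hxy⟩, rfl⟩
          refine ⟨⟨x, ⟨hxE, ?_⟩, rfl⟩, by rw [← dyIdx_parent, hxy]⟩
          rw [dyIdx_eq_of_le (Nat.mul_le_mul_left m htt') hxy, hyC.2]
      rw [hcell]
      exact hu t' (by omega) _ ⟨y, hyC.1, rfl⟩
    rw [Set.ncard_eq_ncard_image_mul ((hE.subset (sep_subset _ _)).image _) _ hfiber, hparent,
      ih (by omega), Finset.prod_Ico_succ_top htt']

lemma uniform_mul {ℓ m N : ℕ} {E : Set ℝ} {R : ℕ → ℕ} (hE : E.Finite)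
    (hu : uniform m (ℓ * N) E R) :
    uniform (ℓ * m) N E (fun s => ∏ u ∈ Finset.Ico (ℓ * s) (ℓ * (s + 1)), R u) := by
  rw [uniform_iff]
  intro s hs k hk
  have hlevel : ∀ r, ℓ * m * r = m * (ℓ * r) := fun r => by ring
  rw [hlevel] at hk ⊢
  rw [hlevel]
  exact ncard_image_dyIdx_eq_prod hE hu (by gcongr; omega) (Nat.mul_le_mul_left ℓ hs) hk

def childIdx (B : Set ℝ) (m t : ℕ) (k : ℤ) : Set ℤ :=
  dyIdx (m * (t + 1)) '' {x ∈ B | dyIdx (m * t) x = k}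

def Admissible (B : Set ℝ) (m t : ℕ) (x : ℝ) : Prop :=
  ∀ u < t, OddRank (childIdx B m u (dyIdx (m * u) x)) (dyIdx (m * (u + 1)) x)

def prune (B : Set ℝ) (m L : ℕ) : Set ℝ := {x ∈ B | Admissible B m L x}

section prune

variable {B : Set ℝ} {m L : ℕ}

lemma prune_subset : prune B m L ⊆ B := sep_subset _ _

lemma childIdx_finite (hB : B.Finite) (t : ℕ) (k : ℤ) : (childIdx B m t k).Finite :=
  (hB.subset (sep_subset _ _)).image _

lemma admissible_succ_iff {t : ℕ} {x : ℝ} : Admissible B m (t + 1) x ↔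
    Admissible B m t x ∧ OddRank (childIdx B m t (dyIdx (m * t) x)) (dyIdx (m * (t + 1)) x) :=
  Nat.forall_lt_succ_right

lemma Admissible.congr {t : ℕ} {x y : ℝ} (hx : Admissible B m t x)
    (hxy : dyIdx (m * t) x = dyIdx (m * t) y) : Admissible B m t y := by
  intro u hu
  rw [← dyIdx_eq_of_le (Nat.mul_le_mul_left m hu.le) hxy,
    ← dyIdx_eq_of_le (Nat.mul_le_mul_left m hu) hxy]
  exact hx u hu

lemma admissible_succ_of_oddRank {t : ℕ} {x y : ℝ} (hx : Admissible B m t x)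
    (hxy : dyIdx (m * t) x = dyIdx (m * t) y)
    (hy : OddRank (childIdx B m t (dyIdx (m * t) x)) (dyIdx (m * (t + 1)) y)) :
    Admissible B m (t + 1) y :=
  admissible_succ_iff.mpr ⟨hx.congr hxy, hxy ▸ hy⟩

lemma exists_mem_prune_of_admissible (hB : B.Finite) {t : ℕ} (htL : t ≤ L) {x : ℝ} (hx : x ∈ B)
    (hadm : Admissible B m t x) : ∃ y ∈ prune B m L, dyIdx (m * t) y = dyIdx (m * t) x := by
  obtain ⟨d, rfl⟩ := Nat.exists_eq_add_of_le htL
  clear htL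
  induction d generalizing t x with
  | zero => exact ⟨x, ⟨hx, hadm⟩, rfl⟩
  | succ d ih =>
    obtain ⟨_, ⟨z, ⟨hzB, hzx⟩, rfl⟩, hodd⟩ := exists_oddRank (childIdx_finite hB t _)
      ⟨_, x, ⟨hx, rfl⟩, rfl⟩
    rw [← add_assoc, add_right_comm]
    obtain ⟨y, hy, hyz⟩ := ih hzB (admissible_succ_of_oddRank hadm hzx.symm hodd)
    exact ⟨y, hy, (dyIdx_eq_of_le (Nat.mul_le_mul_left m t.le_succ) hyz).trans hzx⟩

lemma childIdx_prune (hB : B.Finite) {t : ℕ} (ht : t < L) {k : ℤ}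
    (hk : {x ∈ prune B m L | dyIdx (m * t) x = k}.Nonempty) :
    childIdx (prune B m L) m t k = {j ∈ childIdx B m t k | OddRank (childIdx B m t k) j} := by
  obtain ⟨x₀, ⟨-, hx₀⟩, rfl⟩ := hk
  ext j
  constructor
  · rintro ⟨x, ⟨⟨hxB, hx⟩, hxk⟩, rfl⟩
    exact ⟨⟨x, ⟨hxB, hxk⟩, rfl⟩, hxk ▸ hx t ht⟩
  · rintro ⟨⟨z, ⟨hzB, hz⟩, rfl⟩, hodd⟩
    have hadm := admissible_succ_of_oddRank (fun u hu => hx₀ u (hu.trans ht)) hz.symm hodd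
    obtain ⟨y, hy, hyz⟩ := exists_mem_prune_of_admissible hB ht hzB hadm
    exact ⟨y, ⟨hy, (dyIdx_eq_of_le (Nat.mul_le_mul_left m t.le_succ) hyz).trans hz⟩, hyz⟩

lemma uniform_prune (hB : B.Finite) {R : ℕ → ℕ} (hu : uniform m L B R) :
    uniform m L (prune B m L) (fun s => (R s + 1) / 2) := by
  rw [uniform_iff] at hu ⊢
  intro s hs k hk
  have hkB : {x ∈ B | dyIdx (m * s) x = k}.Nonempty := hk.mono fun x hx => ⟨hx.1.1, hx.2⟩
  rw [← childIdx, childIdx_prune hB hs hk, ncard_setOf_oddRank (childIdx_finite hB s k),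
    childIdx, hu s hs k hkB]

lemma dyIdx_add_two_le_of_mem_prune (hB : B ⊆ Ico 0 1) {s : ℕ} (hs : s ≤ L) {x y : ℝ}
    (hx : x ∈ prune B m L) (hy : y ∈ prune B m L) (hlt : dyIdx (m * s) x < dyIdx (m * s) y) :
    dyIdx (m * s) x + 2 ≤ dyIdx (m * s) y := by
  induction s with
  | zero =>
    simp only [mul_zero, dyIdx_zero (hB hx.1), dyIdx_zero (hB hy.1), lt_self_iff_false] at hlt
  | succ s ih =>
    have hparent : dyIdx (m * s) x ≤ dyIdx (m * s) y := by
      rw [dyIdx_parent, dyIdx_parent m s y]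
      exact Int.ediv_le_ediv (by positivity) hlt.le
    rcases hparent.lt_or_eq with hlt' | heq
    · exact add_two_le_of_ediv_add_two_le (c := 2 ^ m) (by positivity)
        (by rw [← dyIdx_parent, ← dyIdx_parent]; exact ih (by omega) hlt')
    · have hxs := hx.2 s (by omega)
      have hys := hy.2 s (by omega)
      rw [← heq] at hys
      exact hxs.add_two_le hys ⟨y, ⟨hy.1, heq.symm⟩, rfl⟩ hlt

end prune

lemma Finset.prod_le_two_pow_card_mul_prod_half {ι : Type*} (s : Finset ι) (f : ι → ℕ) :
    ∏ i ∈ s, f i ≤ 2 ^ s.card * ∏ i ∈ s, (f i + 1) / 2 := by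
  rw [← Finset.prod_const, ← Finset.prod_mul_distrib]
  exact Finset.prod_le_prod' fun i _ => by omega

lemma ncard_eq_prod_of_uniform {m L : ℕ} {B : Set ℝ} {R : ℕ → ℕ}
    (hB : B ⊆ lat ((2:ℝ) ^ (-((m * L : ℕ) : ℤ))) ∩ Ico 0 1) (hne : B.Nonempty)
    (hu : uniform m L B R) : B.ncard = ∏ u ∈ Finset.range L, R u := by
  have hfin : B.Finite := (lat_inter_Ico_finite (by positivity)).subset hB
  have hinj : InjOn (dyIdx (m * L)) B := by
    intro x hx y hy hxy
    obtain ⟨zx, rfl⟩ := (hB hx).1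
    obtain ⟨zy, rfl⟩ := (hB hy).1
    rw [dyIdx_zpow_mul, dyIdx_zpow_mul] at hxy
    rw [hxy]
  have hcell : {x ∈ B | dyIdx (m * 0) x = 0} = B :=
    sep_eq_self_iff_mem_true.mpr fun x hx => by rw [mul_zero, dyIdx_zero (hB hx).2]
  rw [← hinj.ncard_image, ← hcell, Finset.range_eq_Ico,
    ncard_image_dyIdx_eq_prod hfin hu L.zero_le le_rfl (hcell.symm ▸ hne)]

lemma ncard_le_two_pow_mul_ncard_prune {m L : ℕ} {B : Set ℝ} {R : ℕ → ℕ}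
    (hB : B ⊆ lat ((2:ℝ) ^ (-((m * L : ℕ) : ℤ))) ∩ Ico 0 1) (hu : uniform m L B R) :
    B.ncard ≤ 2 ^ L * (prune B m L).ncard := by
  rcases B.eq_empty_or_nonempty with rfl | ⟨x, hx⟩
  · simp
  have hfin : B.Finite := (lat_inter_Ico_finite (by positivity)).subset hB
  obtain ⟨y, hy, -⟩ := exists_mem_prune_of_admissible hfin L.zero_le hx (m := m)
    fun u hu => absurd hu u.not_lt_zero
  rw [ncard_eq_prod_of_uniform hB ⟨x, hx⟩ hu,
    ncard_eq_prod_of_uniform (prune_subset.trans hB) ⟨y, hy⟩ (uniform_prune hfin hu)]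
  simpa using Finset.prod_le_two_pow_card_mul_prod_half (Finset.range L) R

lemma two_zpow_rpow_mul_two_pow_le_one {m L : ℕ} {η : ℝ} (hmη : 2 ≤ m * η) :
    ((2:ℝ) ^ (-((m * L : ℕ) : ℤ))) ^ (η / 2) * 2 ^ L ≤ 1 := by
  rw [← Real.rpow_intCast, ← Real.rpow_mul zero_le_two, ← Real.rpow_natCast,
    ← Real.rpow_add two_pos]
  apply Real.rpow_le_one_of_one_le_of_nonpos one_le_two
  push_cast
  nlinarith [mul_nonneg (Nat.cast_nonneg L : (0:ℝ) ≤ L) (sub_nonneg.mpr hmη)]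

lemma polarised_of_le_two_pow_mul {η : ℝ} {ℓ m N : ℕ} {R R' : ℕ → ℕ} (hmη : 2 ≤ m * η)
    (hpol : polarised (η / 2) (ℓ * m) N R R) (hle : ∀ s < N, R' s ≤ R s)
    (hR : ∀ s < N, R s ≤ 2 ^ ℓ * R' s) : polarised η (ℓ * m) N R' R' := by
  intro s hs h1
  have hexp : (1 - η) * ((ℓ * m : ℕ) : ℝ) + ℓ ≤ (1 - η / 2) * ((ℓ * m : ℕ) : ℝ) := by
    push_cast
    nlinarith [mul_nonneg (Nat.cast_nonneg ℓ : (0:ℝ) ≤ ℓ) (sub_nonneg.mpr hmη)]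
  refine le_of_mul_le_mul_right ?_ (by positivity : (0:ℝ) < 2 ^ ℓ)
  calc (2:ℝ) ^ ((1 - η) * ((ℓ * m : ℕ) : ℝ)) * 2 ^ ℓ
      = 2 ^ ((1 - η) * ((ℓ * m : ℕ) : ℝ) + ℓ) := by rw [Real.rpow_add two_pos, Real.rpow_natCast]
    _ ≤ 2 ^ ((1 - η / 2) * ((ℓ * m : ℕ) : ℝ)) := Real.rpow_le_rpow_of_exponent_le one_le_two hexp
    _ ≤ R s := hpol s hs (h1.trans_le (hle s hs))
    _ ≤ R' s * 2 ^ ℓ := by rw [mul_comm]; exact_mod_cast hR s hs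

lemma polarised_prod_half {η : ℝ} {ℓ m N : ℕ} {R R₂ : ℕ → ℕ} (hmη : 2 ≤ m * η)
    (hR₂ : ∀ s < N, R₂ s = ∏ u ∈ Finset.Ico (ℓ * s) (ℓ * (s + 1)), R u)
    (hpol : polarised (η / 2) (ℓ * m) N R₂ R₂) :
    polarised η (ℓ * m) N (fun s => ∏ u ∈ Finset.Ico (ℓ * s) (ℓ * (s + 1)), (R u + 1) / 2)
      (fun s => ∏ u ∈ Finset.Ico (ℓ * s) (ℓ * (s + 1)), (R u + 1) / 2) := by
  refine polarised_of_le_two_pow_mul hmη hpol (fun s hs => ?_) (fun s hs => ?_) <;> rw [hR₂ s hs]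
  · exact Finset.prod_le_prod' fun u _ => by omega
  · simpa [Nat.card_Ico, mul_add_one] using
      Finset.prod_le_two_pow_card_mul_prod_half (Finset.Ico (ℓ * s) (ℓ * (s + 1))) R

lemma prune_separated {B : Set ℝ} {m L : ℕ} (hB : B ⊆ Ico 0 1) {s : ℕ} (hs : s ≤ L)
    {k₁ k₂ : ℤ} (hk : k₁ ≠ k₂)
    (h₁ : (prune B m L ∩ dyI ((2:ℝ) ^ (-(m * s : ℤ))) k₁).Nonempty)
    (h₂ : (prune B m L ∩ dyI ((2:ℝ) ^ (-(m * s : ℤ))) k₂).Nonempty) {x y : ℝ}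
    (hx : x ∈ dyI ((2:ℝ) ^ (-(m * s : ℤ))) k₁) (hy : y ∈ dyI ((2:ℝ) ^ (-(m * s : ℤ))) k₂) :
    (2:ℝ) ^ (-(m * s : ℤ)) ≤ |x - y| := by
  simp only [← Nat.cast_mul, inter_dyI_eq] at h₁ h₂ hx hy ⊢
  obtain ⟨x₁, hx₁, rfl⟩ := h₁
  obtain ⟨x₂, hx₂, rfl⟩ := h₂
  rcases hk.lt_or_gt with hlt | hlt
  · exact le_abs_sub_of_mem_dyI (dyIdx_add_two_le_of_mem_prune hB hs hx₁ hx₂ hlt) hx hy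
      (by positivity)
  · rw [abs_sub_comm]
    exact le_abs_sub_of_mem_dyI (dyIdx_add_two_le_of_mem_prune hB hs hx₂ hx₁ hlt) hy hx
      (by positivity)

/-- **Proposition (pruning for separation).**
Let `η ∈ (0,1)`, `ℓ, m, N ∈ ℕ` with `m ≥ 2/η`, and `δ = 2^{−ℓmN}`. Let `B′ ⊂ [0,1)` be
a `δ`-set which is `(m, ℓN)`-uniform and `(η/2, ℓm, N)`-polarised. Then there exists
`B″ ⊂ B′` which is `(m, ℓN)`-uniform and `(η, ℓm, N)`-polarised, with
`|B″| ≥ δ^{η/2} |B′|`, such that for every `s ∈ {0,…,ℓN−1}`, distinct dyadic intervals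
of length `2^{−ms}` intersecting `B″` are at distance `≥ 2^{−ms}`. -/
theorem prop2 (η : ℝ) (hη : η ∈ Set.Ioo (0:ℝ) 1) (ℓ m N : ℕ) (hm : 2 / η ≤ (m : ℝ))
    (δ : ℝ) (hδ : δ = (2:ℝ) ^ (-(ℓ * m * N : ℤ)))
    (B' : Set ℝ) (hB' : B' ⊆ lat δ ∩ Set.Ico 0 1)
    (R1 : ℕ → ℕ) (hu1 : uniform m (ℓ * N) B' R1)
    (R2 : ℕ → ℕ) (hu2 : uniform (ℓ * m) N B' R2)
    (hpol : polarised (η / 2) (ℓ * m) N R2 R2) :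
    ∃ B'' : Set ℝ, B'' ⊆ B' ∧
      (∃ R1' : ℕ → ℕ, uniform m (ℓ * N) B'' R1') ∧
      (∃ R2' : ℕ → ℕ, uniform (ℓ * m) N B'' R2' ∧ polarised η (ℓ * m) N R2' R2') ∧
      δ ^ (η / 2) * (B'.ncard : ℝ) ≤ (B''.ncard : ℝ) ∧
      (∀ s : ℕ, s < ℓ * N → ∀ k₁ k₂ : ℤ, k₁ ≠ k₂ →
        (B'' ∩ dyI ((2:ℝ) ^ (-(m * s : ℤ))) k₁).Nonempty →
        (B'' ∩ dyI ((2:ℝ) ^ (-(m * s : ℤ))) k₂).Nonempty →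
        ∀ x ∈ dyI ((2:ℝ) ^ (-(m * s : ℤ))) k₁, ∀ y ∈ dyI ((2:ℝ) ^ (-(m * s : ℤ))) k₂,
          (2:ℝ) ^ (-(m * s : ℤ)) ≤ |x - y|) := by
  have hmη : 2 ≤ (m : ℝ) * η := by rwa [div_le_iff₀ hη.1] at hm
  rcases B'.eq_empty_or_nonempty with rfl | hne
  · exact ⟨∅, empty_subset _, ⟨R1, fun _ _ _ h => by simp at h⟩,
      ⟨0, fun _ _ _ h => by simp at h, fun _ _ h => by simp at h⟩, by simp,
      fun _ _ _ _ _ h => by simp at h⟩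
  obtain rfl : δ = (2:ℝ) ^ (-((m * (ℓ * N) : ℕ) : ℤ)) := by rw [hδ]; push_cast; ring_nf
  have hfin : B'.Finite := (lat_inter_Ico_finite (by positivity)).subset hB'
  have hpruned := uniform_prune hfin hu1
  refine ⟨prune B' m (ℓ * N), prune_subset, ⟨_, hpruned⟩,
    ⟨_, uniform_mul (hfin.subset prune_subset) hpruned,
      polarised_prod_half hmη (fun s hs => uniform_branching_eq hne hu2 (uniform_mul hfin hu1) hs)
        hpol⟩, ?_,
    fun s hs _ _ hk h₁ h₂ _ hx _ hy =>
      prune_separated (hB'.trans inter_subset_right) hs.le hk h₁ h₂ hx hy⟩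
  calc _ ≤ ((2:ℝ) ^ (-((m * (ℓ * N) : ℕ) : ℤ))) ^ (η / 2) *
        (2 ^ (ℓ * N) * (prune B' m (ℓ * N)).ncard) := by
        gcongr
        exact_mod_cast ncard_le_two_pow_mul_ncard_prune hB' hu1
    _ ≤ (prune B' m (ℓ * N)).ncard := by
        rw [← mul_assoc]
        exact mul_le_of_le_one_left (Nat.cast_nonneg _) (two_zpow_rpow_mul_two_pow_le_one hmη)
end

section
/- Let η ∈ (0,1), ℓ, m, N ∈ ℕ, δ = 2^{−ℓmN}, and β₁ ∈ [0, 1). Let B ⊂ (δ·ℤ) ∩ [0,1] with |B| = δ^{−β₁}, and let B′ ⊂ B be a subset with |B′| ≥ δ^η |B| which is (ℓm, N)-uniform and (η, ℓm, N)-polarised. Let 𝒩_{B′} denote the family of maximal intervals 𝓘 ⊂ {0,…,N−1} such that R_{B′}^{ℓm}(σ) = 1 for all σ ∈ 𝓘. Then the total length of the intervals in 𝒩_{B′} satisfies Σ_{𝓘 ∈ 𝒩_{B′}} |𝓘| ≥ (1 − β₁/(1−η))·N. -/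
open MeasureTheory Set Pointwise

/-- The family `𝒩` of maximal intervals `{a,…,b} ⊆ {0,…,N−1}` on which `R ≡ 1`,
encoded as the set of pairs `(a, b)` of endpoints. -/
noncomputable def maxOnes (N : ℕ) (R : ℕ → ℕ) : Finset (ℕ × ℕ) := by
  classical
  exact (Finset.range N ×ˢ Finset.range N).filter (fun p =>
    p.1 ≤ p.2 ∧ (∀ σ : ℕ, p.1 ≤ σ → σ ≤ p.2 → R σ = 1) ∧
    (p.1 = 0 ∨ R (p.1 - 1) ≠ 1) ∧ (p.2 + 1 = N ∨ R (p.2 + 1) ≠ 1))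

lemma mem_dyI_iff {r : ℝ} (hr : 0 < r) {x : ℝ} {k : ℤ} :
    x ∈ dyI r k ↔ k = ⌊x / r⌋ := by
  rw [dyI, Set.mem_Ico, eq_comm, Int.floor_eq_iff]
  constructor
  · rintro ⟨h1, h2⟩
    exact ⟨(le_div_iff₀ hr).2 (by linarith), (div_lt_iff₀ hr).2 (by linarith)⟩
  · rintro ⟨h1, h2⟩
    exact ⟨by nlinarith [(le_div_iff₀ hr).1 h1], by nlinarith [(div_lt_iff₀ hr).1 h2]⟩

lemma covSet_eq {r : ℝ} (hr : 0 < r) (E : Set ℝ) :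
    {k : ℤ | (E ∩ dyI r k).Nonempty} = (fun x => ⌊x / r⌋) '' E := by
  ext k
  simp only [Set.mem_setOf_eq, Set.mem_image, Set.inter_nonempty]
  constructor
  · rintro ⟨x, hxE, hxd⟩
    exact ⟨x, hxE, ((mem_dyI_iff hr).1 hxd).symm⟩
  · rintro ⟨x, hxE, hk⟩
    exact ⟨x, hxE, (mem_dyI_iff hr).2 hk.symm⟩

lemma cov_eq_ncard_image {r : ℝ} (hr : 0 < r) (E : Set ℝ) :
    cov r E = ((fun x => ⌊x / r⌋) '' E).ncard := by
  rw [cov, covSet_eq hr, Nat.card_coe_set_eq]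

lemma cov_le_ncard {r : ℝ} (hr : 0 < r) {E : Set ℝ} (hE : E.Finite) :
    cov r E ≤ E.ncard := by
  rw [cov_eq_ncard_image hr]
  exact Set.ncard_image_le hE

lemma cov_pos {r : ℝ} (hr : 0 < r) {E : Set ℝ} (hE : E.Finite) (hne : E.Nonempty) :
    1 ≤ cov r E := by
  rw [cov_eq_ncard_image hr]
  rw [Nat.one_le_iff_ne_zero, ← Nat.pos_iff_ne_zero]
  exact (Set.ncard_pos (hE.image _)).2 (hne.image _)

lemma dyI_subset {r' : ℝ} (hr' : 0 < r') {q : ℤ} (hq : 0 < q) (k' : ℤ) :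
    dyI r' k' ⊆ dyI ((q : ℝ) * r') (k' / q) := by
  intro x hx
  obtain ⟨h1, h2⟩ := hx
  have hmod := Int.emod_nonneg k' (ne_of_gt hq)
  have hmodlt := Int.emod_lt_of_pos k' hq
  have hdm : q * (k' / q) + k' % q = k' := Int.mul_ediv_add_emod k' q
  constructor
  · have : ((q * (k' / q) : ℤ) : ℝ) ≤ (k' : ℝ) := by exact_mod_cast by omega
    push_cast at this ⊢
    nlinarith
  · have : ((k' + 1 : ℤ) : ℝ) ≤ ((q * (k' / q) + q : ℤ) : ℝ) := by exact_mod_cast by omega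
    push_cast at this ⊢
    nlinarith

lemma finite_covSet {r : ℝ} (hr : 0 < r) {E : Set ℝ} (hE : E.Finite) :
    {k : ℤ | (E ∩ dyI r k).Nonempty}.Finite := by
  rw [covSet_eq hr]
  exact hE.image _

/-- Step lemma: `cov r E * RR ≤ cov r' E` when every coarse box meeting `E` contains
exactly `RR` fine boxes meeting `E`. -/
lemma cov_step {r' : ℝ} (hr' : 0 < r') {q : ℤ} (hq : 0 < q) {E : Set ℝ} (hE : E.Finite)
    {RR : ℕ}
    (h : ∀ k : ℤ, (E ∩ dyI ((q : ℝ) * r') k).Nonempty →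
      cov r' (E ∩ dyI ((q : ℝ) * r') k) = RR) :
    cov ((q : ℝ) * r') E * RR ≤ cov r' E := by
  classical
  have hr : (0:ℝ) < (q : ℝ) * r' := by positivity
  set K := {k : ℤ | (E ∩ dyI ((q:ℝ) * r') k).Nonempty} with hK
  have hKfin : K.Finite := finite_covSet hr hE
  have hK'fin : {k' : ℤ | (E ∩ dyI r' k').Nonempty}.Finite := finite_covSet hr' hE
  -- fine index sets
  set S : ℤ → Set ℤ := fun k => {k' : ℤ | ((E ∩ dyI ((q:ℝ) * r') k) ∩ dyI r' k').Nonempty}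
    with hS
  have hSfin : ∀ k, (S k).Finite := fun k =>
    finite_covSet hr' (hE.subset (Set.inter_subset_left))
  -- each S k ⊆ K'
  have hSsub : ∀ k, S k ⊆ {k' : ℤ | (E ∩ dyI r' k').Nonempty} := by
    rintro k k' ⟨x, ⟨⟨hxE, _⟩, hxd⟩⟩
    exact ⟨x, hxE, hxd⟩
  -- disjointness
  have hdisj : ∀ k1 ∈ hKfin.toFinset, ∀ k2 ∈ hKfin.toFinset, k1 ≠ k2 →
      Disjoint ((hSfin k1).toFinset) ((hSfin k2).toFinset) := by
    intro k1 _ k2 _ hne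
    rw [Finset.disjoint_left]
    intro k' h1 h2
    rw [Set.Finite.mem_toFinset] at h1 h2
    obtain ⟨x1, ⟨⟨_, hx1c⟩, hx1f⟩⟩ := h1
    obtain ⟨x2, ⟨⟨_, hx2c⟩, hx2f⟩⟩ := h2
    have e1 : k1 = k' / q := by
      have := dyI_subset hr' hq k' hx1f
      rw [mem_dyI_iff hr] at hx1c this
      omega
    have e2 : k2 = k' / q := by
      have := dyI_subset hr' hq k' hx2f
      rw [mem_dyI_iff hr] at hx2c this
      omega
    exact hne (e1.trans e2.symm)
  -- count
  have hcard : ∀ k ∈ hKfin.toFinset, ((hSfin k).toFinset).card = RR := by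
    intro k hk
    rw [Set.Finite.mem_toFinset] at hk
    rw [← h k hk, cov, Nat.card_coe_set_eq, Set.ncard_eq_toFinset_card _ (hSfin k)]
  calc cov ((q:ℝ) * r') E * RR
      = ∑ k ∈ hKfin.toFinset, ((hSfin k).toFinset).card := by
        rw [Finset.sum_congr rfl hcard, Finset.sum_const, smul_eq_mul, cov,
          Nat.card_coe_set_eq, Set.ncard_eq_toFinset_card _ hKfin]
    _ = (hKfin.toFinset.biUnion (fun k => (hSfin k).toFinset)).card :=
        (Finset.card_biUnion hdisj).symm
    _ ≤ hK'fin.toFinset.card := by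
        apply Finset.card_le_card
        intro k' hk'
        rw [Finset.mem_biUnion] at hk'
        obtain ⟨k, _, hk'⟩ := hk'
        rw [Set.Finite.mem_toFinset] at hk' ⊢
        exact hSsub k hk'
    _ = cov r' E := by
        rw [cov, Nat.card_coe_set_eq, Set.ncard_eq_toFinset_card _ hK'fin]

lemma cov_chain {M N : ℕ} {E : Set ℝ} (hE : E.Finite) (hne : E.Nonempty) {R : ℕ → ℕ}
    (hu : uniform M N E R) :
    ∀ n, n ≤ N → ∏ s ∈ Finset.range n, R s ≤ cov ((2:ℝ) ^ (-(M * n : ℤ))) E := by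
  intro n
  induction n with
  | zero =>
    intro _
    simpa using cov_pos (by positivity) hE hne
  | succ n ih =>
    intro hn
    have hcoarse : ((2:ℝ) ^ (M : ℕ) : ℝ) * (2:ℝ) ^ (-(M * (n+1) : ℤ)) =
        (2:ℝ) ^ (-(M * n : ℤ)) := by
      rw [← zpow_natCast (2:ℝ) M, ← zpow_add₀ (two_ne_zero)]
      congr 1
      push_cast
      ring
    have hq : (0:ℤ) < 2 ^ M := by positivity
    have hstep := cov_step (r' := (2:ℝ) ^ (-(M * (n+1) : ℤ))) (by positivity) hq hE
      (RR := R n) ?_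
    · rw [Finset.prod_range_succ]
      have hc : ((2 ^ M : ℤ) : ℝ) * (2:ℝ) ^ (-(M * (n+1) : ℤ)) = (2:ℝ) ^ (-(M * n : ℤ)) := by
        push_cast
        exact hcoarse
      rw [hc] at hstep
      exact le_trans (Nat.mul_le_mul_right _ (ih (by omega))) hstep
    · intro k hk
      have hc : ((2 ^ M : ℤ) : ℝ) * (2:ℝ) ^ (-(M * (n+1) : ℤ)) = (2:ℝ) ^ (-(M * n : ℤ)) := by
        push_cast
        exact hcoarse
      rw [hc] at hk ⊢
      exact hu n (by omega) k hk

lemma mem_maxOnes {N : ℕ} {R : ℕ → ℕ} {p : ℕ × ℕ} :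
    p ∈ maxOnes N R ↔ p.1 < N ∧ p.2 < N ∧ p.1 ≤ p.2 ∧
      (∀ σ : ℕ, p.1 ≤ σ → σ ≤ p.2 → R σ = 1) ∧
      (p.1 = 0 ∨ R (p.1 - 1) ≠ 1) ∧ (p.2 + 1 = N ∨ R (p.2 + 1) ≠ 1) := by
  classical
  simp only [maxOnes, Finset.mem_filter, Finset.mem_product, Finset.mem_range]
  tauto

lemma maxOnes_sum (N : ℕ) (R : ℕ → ℕ) :
    ∑ p ∈ maxOnes N R, (p.2 - p.1 + 1) =
      ((Finset.range N).filter (fun s => R s = 1)).card := by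
  classical
  have hdisj : ∀ p ∈ maxOnes N R, ∀ q ∈ maxOnes N R, p ≠ q →
      Disjoint (Finset.Icc p.1 p.2) (Finset.Icc q.1 q.2) := by
    intro p hp q hq hne
    rw [Finset.disjoint_left]
    intro σ hσp hσq
    rw [Finset.mem_Icc] at hσp hσq
    rw [mem_maxOnes] at hp hq
    obtain ⟨hp1, hp2, hple, hpone, hpl, hpr⟩ := hp
    obtain ⟨hq1, hq2, hqle, hqone, hql, hqr⟩ := hq
    apply hne
    have h1 : p.1 = q.1 := by
      by_contra hne1
      rcases Nat.lt_or_ge p.1 q.1 with h | h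
      · have : R (q.1 - 1) = 1 := hpone _ (by omega) (by omega)
        rcases hql with h0 | hbad
        · omega
        · exact hbad this
      · have h' : q.1 < p.1 := by omega
        have : R (p.1 - 1) = 1 := hqone _ (by omega) (by omega)
        rcases hpl with h0 | hbad
        · omega
        · exact hbad this
    have h2 : p.2 = q.2 := by
      by_contra hne2
      rcases Nat.lt_or_ge p.2 q.2 with h | h
      · have : R (p.2 + 1) = 1 := hqone _ (by omega) (by omega)
        rcases hpr with h0 | hbad
        · omega
        · exact hbad this
      · have h' : q.2 < p.2 := by omega
        have : R (q.2 + 1) = 1 := hpone _ (by omega) (by omega)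
        rcases hqr with h0 | hbad
        · omega
        · exact hbad this
    exact Prod.ext h1 h2
  have hcover : (Finset.range N).filter (fun s => R s = 1) =
      (maxOnes N R).biUnion (fun p => Finset.Icc p.1 p.2) := by
    ext s
    simp only [Finset.mem_filter, Finset.mem_range, Finset.mem_biUnion, Finset.mem_Icc]
    constructor
    · rintro ⟨hsN, hs1⟩
      have hdec : DecidablePred (fun a => ∀ t : ℕ, a ≤ t → t ≤ s → R t = 1) :=
        fun _ => Classical.dec _
      have hex : ∃ a, ∀ t : ℕ, a ≤ t → t ≤ s → R t = 1 := ⟨s, fun t h1 h2 => by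
        have : t = s := le_antisymm h2 h1
        rw [this]; exact hs1⟩
      set a₀ := @Nat.find _ hdec hex with ha₀
      have ha₀spec : ∀ t : ℕ, a₀ ≤ t → t ≤ s → R t = 1 := @Nat.find_spec _ hdec hex
      have ha₀le : a₀ ≤ s := by
        by_contra hgt
        have := ha₀spec s
        have hmin := @Nat.find_min _ hdec hex s (by omega)
        push_neg at hmin
        obtain ⟨t, ht1, ht2, ht3⟩ := hmin
        have : t = s := le_antisymm ht2 ht1
        rw [this] at ht3
        exact ht3 hs1
      have ha₀l : a₀ = 0 ∨ R (a₀ - 1) ≠ 1 := by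
        rcases Nat.eq_zero_or_pos a₀ with h0 | hpos
        · exact Or.inl h0
        · right
          intro hbad
          have hmin := @Nat.find_min _ hdec hex (a₀ - 1) (by omega)
          push_neg at hmin
          obtain ⟨t, ht1, ht2, ht3⟩ := hmin
          rcases Nat.eq_or_lt_of_le ht1 with he | hlt
          · rw [he] at hbad; exact ht3 hbad
          · exact ht3 (ha₀spec t (by omega) ht2)
      -- upper end
      set Q : ℕ → Prop := fun b => s ≤ b ∧ ∀ t : ℕ, s ≤ t → t ≤ b → R t = 1 with hQ
      letI hQdec : DecidablePred Q := fun _ => Classical.dec _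
      set b₀ := Nat.findGreatest Q (N - 1) with hb₀
      have hQs : Q s := ⟨le_refl s, fun t h1 h2 => by
        have : t = s := le_antisymm h2 h1
        rw [this]; exact hs1⟩
      have hsb₀ : s ≤ b₀ := Nat.le_findGreatest (by omega) hQs
      have hb₀spec : Q b₀ := Nat.findGreatest_spec (m := s) (by omega) hQs
      have hb₀N : b₀ < N := by
        have := Nat.findGreatest_le (P := Q) (N - 1)
        omega
      have hb₀r : b₀ + 1 = N ∨ R (b₀ + 1) ≠ 1 := by
        rcases Nat.eq_or_lt_of_le hb₀N with he | hlt
        · exact Or.inl he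
        · right
          intro hbad
          have := Nat.findGreatest_is_greatest (P := Q) (k := b₀ + 1) (n := N - 1) (by omega) (by omega)
          apply this
          exact ⟨by omega, fun t h1 h2 => by
            rcases Nat.eq_or_lt_of_le h2 with he' | hlt'
            · rw [he']; exact hbad
            · exact hb₀spec.2 t h1 (by omega)⟩
      refine ⟨(a₀, b₀), ?_, ha₀le, hsb₀⟩
      rw [mem_maxOnes]
      refine ⟨by omega, hb₀N, by omega, ?_, ha₀l, hb₀r⟩
      intro σ h1 h2
      rcases le_or_gt σ s with hc | hc
      · exact ha₀spec σ h1 hc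
      · exact hb₀spec.2 σ (by omega) h2
    · rintro ⟨p, hp, h1, h2⟩
      rw [mem_maxOnes] at hp
      exact ⟨by omega, hp.2.2.2.1 s h1 h2⟩
  rw [hcover, Finset.card_biUnion hdisj]
  apply Finset.sum_congr rfl
  intro p hp
  rw [mem_maxOnes] at hp
  rw [Nat.card_Icc]
  omega

lemma lat_inter_finite {δ : ℝ} (hδ : 0 < δ) : (lat δ ∩ Set.Icc 0 1).Finite := by
  apply Set.Finite.subset ((Set.finite_Icc (0:ℤ) ⌈1/δ⌉).image (fun z : ℤ => δ * (z:ℝ)))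
  rintro x ⟨⟨z, rfl⟩, hx0, hx1⟩
  refine ⟨z, ?_, rfl⟩
  rw [Set.mem_Icc]
  constructor
  · by_contra h
    push_neg at h
    have : (z:ℝ) < 0 := by exact_mod_cast h
    nlinarith
  · have hz : (z:ℝ) ≤ 1/δ := by
      rw [le_div_iff₀ hδ]
      nlinarith
    exact_mod_cast hz.trans (Int.le_ceil _)

/-- **Lemma (total length of the trivial-branching intervals of `B′`).**
Let `η ∈ (0,1)`, `δ = 2^{−ℓmN}`, `β₁ ∈ [0,1)`, `B ⊂ (δ·ℤ) ∩ [0,1]` with `|B| = δ^{−β₁}`,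
and let `B′ ⊂ B` with `|B′| ≥ δ^η |B|` be `(ℓm, N)`-uniform with branching numbers `R`
and `(η, ℓm, N)`-polarised. Then the maximal intervals `𝓘 ⊂ {0,…,N−1}` with
`R^{ℓm}_{B′} ≡ 1` on `𝓘` have total length at least `(1 − β₁/(1−η))·N`. -/
theorem lemma1 (η : ℝ) (hη : η ∈ Set.Ioo (0:ℝ) 1) (ℓ m N : ℕ)
    (δ : ℝ) (hδ : δ = (2:ℝ) ^ (-(ℓ * m * N : ℤ)))
    (β₁ : ℝ) (hβ₁ : β₁ ∈ Set.Ico (0:ℝ) 1)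
    (B : Set ℝ) (hB : B ⊆ lat δ ∩ Set.Icc 0 1) (hBcard : (B.ncard : ℝ) = δ ^ (-β₁))
    (B' : Set ℝ) (hB'B : B' ⊆ B) (hB'card : δ ^ η * (B.ncard : ℝ) ≤ (B'.ncard : ℝ))
    (R : ℕ → ℕ) (hu : uniform (ℓ * m) N B' R) (hpol : polarised η (ℓ * m) N R R) :
    (1 - β₁ / (1 - η)) * (N : ℝ) ≤ ∑ p ∈ maxOnes N R, ((p.2 - p.1 + 1 : ℕ) : ℝ) := by
  classical
  obtain ⟨hη0, hη1⟩ := hη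
  obtain ⟨hβ0, hβlt⟩ := hβ₁
  have h1η : (0:ℝ) < 1 - η := by linarith
  have hδpos : 0 < δ := by rw [hδ]; positivity
  have hBfin : B.Finite := (lat_inter_finite hδpos).subset hB
  have hB'fin : B'.Finite := hBfin.subset hB'B
  -- B' nonempty
  have hB'pos : (0:ℝ) < (B'.ncard : ℝ) := by
    apply lt_of_lt_of_le _ hB'card
    rw [hBcard]
    positivity
  have hB'ne : B'.Nonempty := by
    rw [← Set.ncard_pos hB'fin]
    exact_mod_cast hB'pos
  -- R s ≥ 1
  have hRpos : ∀ s, s < N → 1 ≤ R s := by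
    intro s hs
    obtain ⟨x, hx⟩ := hB'ne
    have hr : (0:ℝ) < (2:ℝ) ^ (-((ℓ*m) * s : ℤ)) := by positivity
    have hne : (B' ∩ dyI ((2:ℝ) ^ (-((ℓ*m) * s : ℤ))) ⌊x / (2:ℝ) ^ (-((ℓ*m) * s : ℤ))⌋).Nonempty :=
      ⟨x, hx, (mem_dyI_iff hr).2 rfl⟩
    rw [← hu s hs _ hne]
    exact cov_pos (by positivity) (hB'fin.subset Set.inter_subset_left)
      (hne.mono (Set.inter_subset_inter_left _ (fun y hy => hy)))
  -- product bound
  have hchain : ∏ s ∈ Finset.range N, R s ≤ B'.ncard := by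
    refine le_trans (cov_chain hB'fin hB'ne hu N le_rfl) (cov_le_ncard (by positivity) hB'fin)
  set S := (Finset.range N).filter (fun s => R s ≠ 1) with hSdef
  set K := S.card with hKdef
  have hprodS : ∏ s ∈ S, R s ≤ ∏ s ∈ Finset.range N, R s := by
    rw [← Finset.prod_filter_mul_prod_filter_not (Finset.range N) (fun s => R s ≠ 1)]
    have : ∏ s ∈ (Finset.range N).filter (fun s => ¬ R s ≠ 1), R s = 1 := by
      apply Finset.prod_eq_one
      intro s hs
      simp only [Finset.mem_filter, not_not] at hs
      exact hs.2
    rw [this, mul_one]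
  -- real bound from polarisation
  have hpolS : ((2:ℝ) ^ ((1 - η) * ((ℓ*m : ℕ) : ℝ))) ^ K ≤ (B'.ncard : ℝ) := by
    calc ((2:ℝ) ^ ((1 - η) * ((ℓ*m : ℕ) : ℝ))) ^ K
        = ∏ _s ∈ S, (2:ℝ) ^ ((1 - η) * ((ℓ*m : ℕ) : ℝ)) := by rw [Finset.prod_const]
      _ ≤ ∏ s ∈ S, ((R s : ℕ) : ℝ) := by
          apply Finset.prod_le_prod
          · intro s _; positivity
          · intro s hs
            rw [hSdef, Finset.mem_filter, Finset.mem_range] at hs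
            exact hpol s hs.1 (lt_of_le_of_ne (hRpos s hs.1) (Ne.symm hs.2))
      _ = ((∏ s ∈ S, R s : ℕ) : ℝ) := by rw [Nat.cast_prod]
      _ ≤ (B'.ncard : ℝ) := by exact_mod_cast le_trans hprodS hchain
  have hBub : (B'.ncard : ℝ) ≤ (B.ncard : ℝ) := by
    exact_mod_cast Set.ncard_le_ncard hB'B hBfin
  -- key inequality
  have hkey : (K : ℝ) * (1 - η) ≤ β₁ * N := by
    rcases Nat.eq_zero_or_pos (ℓ * m) with hlm | hlm
    · -- degenerate case: all R are 1
      have hδ1 : δ = 1 := by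
        have h0 : ((ℓ:ℤ) * m * N) = 0 := by exact_mod_cast (by simp [hlm] : ℓ * m * N = 0)
        rw [hδ, h0]
        norm_num
      have hB1 : (B.ncard : ℝ) = 1 := by
        rw [hBcard, hδ1, Real.one_rpow]
      have hB'1 : B'.ncard = 1 := by
        have h1 : (1:ℝ) ≤ (B'.ncard : ℝ) := by
          rw [hδ1, Real.one_rpow, hB1] at hB'card
          linarith
        have h2 : (B'.ncard : ℝ) ≤ 1 := hBub.trans_eq hB1
        have := le_antisymm h2 h1
        exact_mod_cast this
      have hall : ∀ s, s < N → R s = 1 := by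
        intro s hs
        by_contra hne
        have h2le : 2 ≤ R s := by have := hRpos s hs; omega
        have : 2 ≤ ∏ t ∈ Finset.range N, R t := by
          calc 2 ≤ R s := h2le
            _ ≤ ∏ t ∈ Finset.range N, R t := by
                apply Finset.single_le_prod' (fun t ht => hRpos t (Finset.mem_range.1 ht))
                exact Finset.mem_range.2 hs
        omega
      have hS0 : S = ∅ := by
        rw [hSdef, Finset.filter_eq_empty_iff]
        intro s hs
        simp only [not_not]
        exact hall s (Finset.mem_range.1 hs)
      rw [hKdef, hS0]
      simp only [Finset.card_empty, Nat.cast_zero, zero_mul]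
      positivity
    · -- main case
      have h2 : ((2:ℝ)) ^ ((1 - η) * ((ℓ*m : ℕ) : ℝ) * (K : ℝ)) ≤
          (2:ℝ) ^ (((ℓ*m*N : ℕ) : ℝ) * β₁) := by
        have lhs_eq : ((2:ℝ) ^ ((1 - η) * ((ℓ*m : ℕ) : ℝ))) ^ K =
            (2:ℝ) ^ ((1 - η) * ((ℓ*m : ℕ) : ℝ) * (K : ℝ)) := by
          rw [← Real.rpow_natCast ((2:ℝ) ^ ((1 - η) * ((ℓ*m : ℕ) : ℝ))) K,
            ← Real.rpow_mul (by norm_num)]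
        have rhs_eq : δ ^ (-β₁) = (2:ℝ) ^ (((ℓ*m*N : ℕ) : ℝ) * β₁) := by
          rw [hδ, ← Real.rpow_intCast (2:ℝ) (-(ℓ*m*N : ℤ)), ← Real.rpow_mul (by norm_num)]
          congr 1
          push_cast
          ring
        rw [← lhs_eq, ← rhs_eq]
        exact hpolS.trans (hBub.trans_eq hBcard)
      rw [Real.rpow_le_rpow_left_iff (by norm_num : (1:ℝ) < 2)] at h2
      -- (1-η) * (ℓm) * K ≤ (ℓmN) * β₁
      have hlmpos : (0:ℝ) < ((ℓ*m : ℕ) : ℝ) := by exact_mod_cast hlm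
      have hcast : ((ℓ*m*N : ℕ) : ℝ) = ((ℓ*m : ℕ) : ℝ) * N := by push_cast; ring
      rw [hcast] at h2
      nlinarith
  -- combinatorial identity
  have hsum : ∑ p ∈ maxOnes N R, ((p.2 - p.1 + 1 : ℕ) : ℝ) =
      (((Finset.range N).filter (fun s => R s = 1)).card : ℝ) := by
    rw [← maxOnes_sum N R]
    push_cast
    rfl
  have hcards : ((Finset.range N).filter (fun s => R s = 1)).card + K = N := by
    have h := Finset.card_filter_add_card_filter_not
      (s := Finset.range N) (p := fun s => R s = 1)
    rw [Finset.card_range] at h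
    rw [hKdef, hSdef]
    exact h
  rw [hsum]
  have hT : (((Finset.range N).filter (fun s => R s = 1)).card : ℝ) = (N : ℝ) - K := by
    have h2 : (((Finset.range N).filter (fun s => R s = 1)).card : ℝ) + (K:ℝ) = (N:ℝ) := by
      exact_mod_cast congrArg (Nat.cast (R := ℝ)) hcards
    linarith
  rw [hT]
  have hK2 : (K:ℝ) ≤ β₁/(1-η) * (N:ℝ) := by
    rw [div_mul_eq_mul_div, le_div_iff₀ h1η]
    linarith [hkey]
  have expand : (1 - β₁/(1-η)) * (N:ℝ) = (N:ℝ) - β₁/(1-η) * (N:ℝ) := by ring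
  linarith [hK2]
end

section
/- Let ℓ, m, N ∈ ℕ, δ = 2^{−ℓmN}, let A′ ⊂ [0,1) be an (m, ℓN)-uniform δ-set, and let B″ ⊂ [0,1) be any non-empty δ-set. Let μ_{A′} and μ_{B″} be the normalised counting measures on A′ and B″ respectively, and let μ := μ_{A′} × μ_{B″}. Let 𝒥 = {s, …, t} ⊂ {0,…,ℓN−1} be an interval, and let Q₀ be a dyadic square of side 2^{−ms} with μ(Q₀) > 0. Then for every c ∈ [0,1]: H(π_c μ^{Q₀}, 𝒟_{m|𝒥|}) ≥ log₂ R_{A′}^m(𝒥) − 1, where R_{A′}^m(𝒥) := Π_{s' ∈ 𝒥} R_{A′}^m(s′). -/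
open MeasureTheory Set Pointwise
open scoped ENNReal

/-- The normalised counting measure on a finite set. -/
noncomputable def cntM (A : Finset ℝ) : Measure ℝ :=
  ((A.card : ℝ≥0∞))⁻¹ • ∑ a ∈ A, MeasureTheory.Measure.dirac a

/-- The dyadic entropy `H(θ, 𝒟)` of a measure `θ` on `ℝ` with respect to the partition
of `ℝ` into dyadic intervals of length `r`: `Σ_I θ(I)·log₂(1/θ(I))`. -/
noncomputable def dyEnt (r : ℝ) (θ : Measure ℝ) : ℝ :=
  ∑' k : ℤ, (θ (dyI r k)).toReal * Real.logb 2 (1 / (θ (dyI r k)).toReal)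

/-- The renormalised blow-up `μ^{Q}` of a measure `μ` on `ℝ²`, where
`Q = I_{k₁} × I_{k₂}` is the dyadic square of side `r` with indices `k₁, k₂`:
the push-forward of `μ(Q)⁻¹·μ|_Q` under the homothety taking `Q` to `[0,1)²`. -/
noncomputable def blowup (r : ℝ) (k₁ k₂ : ℤ) (μ : Measure (ℝ × ℝ)) : Measure (ℝ × ℝ) :=
  MeasureTheory.Measure.map
    (fun p : ℝ × ℝ => ((p.1 - (k₁ : ℝ) * r) / r, (p.2 - (k₂ : ℝ) * r) / r))
    ((μ (dyI r k₁ ×ˢ dyI r k₂))⁻¹ • μ.restrict (dyI r k₁ ×ˢ dyI r k₂))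

open scoped Classical

/-! ### Auxiliary lemmas -/


/-- Classical count of elements of a finset satisfying a predicate. -/
noncomputable def cnt {α : Type*} (s : Finset α) (p : α → Prop) : ℕ :=
  (@Finset.filter α p (Classical.decPred p) s).card

lemma cnt_eq {α : Type*} (s : Finset α) (p : α → Prop) [h : DecidablePred p] :
    cnt s p = (s.filter p).card := by
  unfold cnt
  exact congrArg Finset.card
    (congrFun (congrArg (fun d => @Finset.filter α p d) (Subsingleton.elim _ _)) s)

lemma mem_dyI {r x : ℝ} {k : ℤ} (hr : 0 < r) : x ∈ dyI r k ↔ ⌊x / r⌋ = k := by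
  rw [dyI, Set.mem_Ico, Int.floor_eq_iff]
  constructor
  · rintro ⟨h1, h2⟩
    exact ⟨(le_div_iff₀ hr).2 (by linarith), (div_lt_iff₀ hr).2 (by linarith)⟩
  · rintro ⟨h1, h2⟩
    exact ⟨by nlinarith [(le_div_iff₀ hr).1 h1], by nlinarith [(div_lt_iff₀ hr).1 h2]⟩

lemma measurable_dyI (r : ℝ) (k : ℤ) : MeasurableSet (dyI r k) := measurableSet_Ico

lemma dyI_subset_s12 {q : ℕ} (hq : 0 < q) {r' : ℝ} (hr : 0 < r') {j k : ℤ}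
    (h : (dyI r' j ∩ dyI ((q:ℝ) * r') k).Nonempty) : dyI r' j ⊆ dyI ((q:ℝ) * r') k := by
  obtain ⟨x, hx1, hx2⟩ := h
  rw [dyI, Set.mem_Ico] at hx1 hx2
  have hq' : (0:ℝ) < q := by exact_mod_cast hq
  have h1 : (k * q : ℤ) ≤ j := by
    have : ((k * q : ℤ) : ℝ) * r' ≤ x := by push_cast; nlinarith [hx2.1]
    have h2 : ((k*q:ℤ):ℝ) * r' < ((j:ℝ) + 1) * r' := lt_of_le_of_lt this hx1.2
    have : ((k*q:ℤ):ℝ) < (j:ℝ) + 1 := by nlinarith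
    exact_mod_cast Int.lt_add_one_iff.mp (by exact_mod_cast this)
  have h2 : (j + 1 : ℤ) ≤ (k+1) * q := by
    have hlt : (j:ℝ) * r' < (((k+1) * q : ℤ):ℝ) * r' := by
      push_cast; nlinarith [hx1.1, hx2.2]
    have : (j:ℝ) < (((k+1)*q:ℤ):ℝ) := by nlinarith
    exact_mod_cast Int.add_one_le_iff.mpr (by exact_mod_cast this)
  intro y hy
  rw [dyI, Set.mem_Ico] at hy ⊢
  constructor
  · calc (k:ℝ) * ((q:ℝ)*r') = ((k:ℝ)*(q:ℝ)) * r' := by ring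
      _ ≤ (j:ℝ) * r' := by
          have hc : ((k:ℝ))*(q:ℝ) ≤ (j:ℝ) := by exact_mod_cast h1
          nlinarith
      _ ≤ y := hy.1
  · have hc : ((j:ℝ)+1) ≤ ((k:ℝ)+1)*(q:ℝ) := by exact_mod_cast h2
    calc y < ((j:ℝ)+1) * r' := hy.2
      _ ≤ (((k:ℝ)+1)*(q:ℝ)) * r' := by nlinarith
      _ = ((k:ℝ)+1) * ((q:ℝ)*r') := by ring

open scoped Classical in
lemma cnt_prod_left {α β : Type*} (A : Finset α) (B : Finset β) (p : α × β → Prop) :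
    cnt (A ×ˢ B) p = ∑ a ∈ A, cnt B (fun b => p (a, b)) := by
  rw [cnt_eq, Finset.card_filter, Finset.sum_product]
  exact Finset.sum_congr rfl fun a _ => by rw [cnt_eq, Finset.card_filter]

open scoped Classical in
lemma cnt_prod_right {α β : Type*} (A : Finset α) (B : Finset β) (p : α × β → Prop) :
    cnt (A ×ˢ B) p = ∑ b ∈ B, cnt A (fun a => p (a, b)) := by
  rw [cnt_eq, Finset.card_filter, Finset.sum_product_right]
  exact Finset.sum_congr rfl fun b _ => by rw [cnt_eq, Finset.card_filter]

open scoped Classical in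
lemma cntM_apply (A : Finset ℝ) {S : Set ℝ} (hS : MeasurableSet S) :
    cntM A S = (A.card : ℝ≥0∞)⁻¹ * cnt A (· ∈ S) := by
  rw [cnt_eq, cntM, Measure.smul_apply, smul_eq_mul, Measure.finset_sum_apply]
  congr 1
  rw [Finset.card_filter]
  push_cast
  refine Finset.sum_congr rfl fun a _ => ?_
  rw [Measure.dirac_apply' _ hS]
  by_cases h : a ∈ S <;> simp [h]

instance cntM_finite (A : Finset ℝ) : IsFiniteMeasure (cntM A) := by
  constructor
  rw [cntM_apply A MeasurableSet.univ, cnt_eq]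
  simp only [Set.mem_univ, Finset.filter_true]
  rcases eq_or_ne A.card 0 with h | h
  · simp [h]
  · rw [ENNReal.inv_mul_cancel (by exact_mod_cast h) (ENNReal.natCast_ne_top _)]
    exact ENNReal.one_lt_top

open scoped Classical in
lemma cnt_prod_apply (A B : Finset ℝ) {S : Set (ℝ × ℝ)} (hS : MeasurableSet S) :
    (cntM A).prod (cntM B) S
      = ((A.card : ℝ≥0∞) * B.card)⁻¹ * cnt (A ×ˢ B) (· ∈ S) := by
  rw [Measure.prod_apply hS]
  have hsl : ∀ a : ℝ, MeasurableSet (Prod.mk a ⁻¹' S) := fun a => measurable_prodMk_left hS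
  calc ∫⁻ a, cntM B (Prod.mk a ⁻¹' S) ∂cntM A
      = (A.card : ℝ≥0∞)⁻¹ * ∑ a ∈ A, cntM B (Prod.mk a ⁻¹' S) := by
        rw [cntM, lintegral_smul_measure, lintegral_finset_sum_measure]
        simp [lintegral_dirac]
    _ = (A.card : ℝ≥0∞)⁻¹ * ∑ a ∈ A, ((B.card : ℝ≥0∞)⁻¹ * cnt B (fun b => (a, b) ∈ S)) := by
        congr 1
        exact Finset.sum_congr rfl fun a _ => cntM_apply B (hsl a)
    _ = ((A.card : ℝ≥0∞) * B.card)⁻¹ * cnt (A ×ˢ B) (· ∈ S) := by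
        rw [← Finset.mul_sum, ENNReal.mul_inv (Or.inr (ENNReal.natCast_ne_top _))
          (Or.inl (ENNReal.natCast_ne_top _)), cnt_prod_left]
        push_cast
        ring

open scoped Classical in
lemma count_level (m LN : ℕ) (A' : Finset ℝ) (R : ℕ → ℕ)
    (hu : uniform m LN (A' : Set ℝ) R)
    (hlat : ∀ x ∈ A', ∃ z : ℤ, x = (2:ℝ) ^ (-(m * LN : ℤ)) * z) :
    ∀ n u k, u + n = LN → (A'.filter (· ∈ dyI ((2:ℝ) ^ (-(m * u : ℤ))) k)).Nonempty →
      (A'.filter (· ∈ dyI ((2:ℝ) ^ (-(m * u : ℤ))) k)).card = ∏ s' ∈ Finset.Ico u LN, R s' := by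
  intro n
  induction n with
  | zero =>
    intro u k hu0 hne
    have huLN : u = LN := by omega
    subst huLN
    rw [Finset.Ico_self, Finset.prod_empty]
    set δ : ℝ := (2:ℝ) ^ (-(m * u : ℤ)) with hδdef
    have hδpos : 0 < δ := zpow_pos (by norm_num) _
    have hcard : (A'.filter (· ∈ dyI δ k)).card ≤ 1 := by
      refine Finset.card_le_one.2 fun x hx y hy => ?_
      simp only [Finset.mem_filter] at hx hy
      obtain ⟨zx, hzx⟩ := hlat x hx.1
      obtain ⟨zy, hzy⟩ := hlat y hy.1
      have hfx : ⌊x / δ⌋ = k := (mem_dyI hδpos).1 hx.2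
      have hfy : ⌊y / δ⌋ = k := (mem_dyI hδpos).1 hy.2
      have hx' : x / δ = (zx : ℝ) := by
        rw [hzx, mul_comm, mul_div_assoc, div_self hδpos.ne', mul_one]
      have hy' : y / δ = (zy : ℝ) := by
        rw [hzy, mul_comm, mul_div_assoc, div_self hδpos.ne', mul_one]
      rw [hx', Int.floor_intCast] at hfx
      rw [hy', Int.floor_intCast] at hfy
      rw [hzx, hzy, hfx, hfy]
    have := hne.card_pos
    omega
  | succ n ih =>
    intro u k hun hne
    have hult : u < LN := by omega
    set r : ℝ := (2:ℝ) ^ (-(m * u : ℤ)) with hrdef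
    set r' : ℝ := (2:ℝ) ^ (-(m * (u + 1) : ℤ)) with hr'def
    have hr'pos : 0 < r' := zpow_pos (by norm_num) _
    have hrpos : 0 < r := zpow_pos (by norm_num) _
    have hq : r = ((2 ^ m : ℕ) : ℝ) * r' := by
      rw [hrdef, hr'def]
      push_cast
      rw [← zpow_natCast (2:ℝ) m, ← zpow_add₀ (by norm_num : (2:ℝ) ≠ 0)]
      congr 1
      ring
    set F := A'.filter (· ∈ dyI r k) with hF
    have hcoe : (A' : Set ℝ) ∩ dyI r k = (F : Set ℝ) := by
      ext x
      simp [hF, Set.mem_inter_iff]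
    have hne' : ((A' : Set ℝ) ∩ dyI r k).Nonempty := by
      obtain ⟨x, hx⟩ := hne
      exact ⟨x, by simpa [Set.mem_inter_iff] using (Finset.mem_filter.1 hx)⟩
    have hcov := hu u hult k hne'
    rw [← hr'def, ← hrdef] at hcov
    set img := F.image fun x => ⌊x / r'⌋ with himg
    have hsetimg : {j : ℤ | (((A' : Set ℝ) ∩ dyI r k) ∩ dyI r' j).Nonempty} = (img : Set ℤ) := by
      ext j
      simp only [Set.mem_setOf_eq, hcoe, himg, Finset.coe_image, Set.mem_image,
        Finset.mem_coe]
      constructor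
      · rintro ⟨x, hx1, hx2⟩
        exact ⟨x, hx1, (mem_dyI hr'pos).1 hx2⟩
      · rintro ⟨x, hx1, hx2⟩
        exact ⟨x, hx1, (mem_dyI hr'pos).2 hx2⟩
    have himgcard : img.card = R u := by
      have : cov r' ((A' : Set ℝ) ∩ dyI r k) = img.card := by
        rw [cov, hsetimg, Nat.card_coe_set_eq, Set.ncard_coe_finset]
      omega
    have hfiber : ∀ j ∈ img, F.filter (fun a => ⌊a / r'⌋ = j) = A'.filter (· ∈ dyI r' j) := by
      intro j hj
      obtain ⟨x, hxF, hxj⟩ := Finset.mem_image.1 hj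
      have hxmem := Finset.mem_filter.1 hxF
      have hsub : dyI r' j ⊆ dyI r k := by
        rw [hq]
        refine dyI_subset_s12 (by positivity) hr'pos ⟨x, ?_, ?_⟩
        · exact (mem_dyI hr'pos).2 hxj
        · rw [← hq]; exact hxmem.2
      ext a
      simp only [hF, Finset.mem_filter, and_assoc]
      constructor
      · rintro ⟨ha, _, hfl⟩
        exact ⟨ha, (mem_dyI hr'pos).2 hfl⟩
      · rintro ⟨ha, hdy⟩
        exact ⟨ha, hsub hdy, (mem_dyI hr'pos).1 hdy⟩
    have hsum : F.card = ∑ j ∈ img, (F.filter fun a => ⌊a / r'⌋ = j).card :=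
      Finset.card_eq_sum_card_fiberwise fun x hx => Finset.mem_image_of_mem _ hx
    have hr'eq : (2:ℝ) ^ (-((m:ℤ) * ((u+1 : ℕ) : ℤ))) = r' := by
      rw [hr'def]; norm_cast
    have hD : ∀ j ∈ img, (F.filter fun a => ⌊a / r'⌋ = j).card
        = ∏ s' ∈ Finset.Ico (u+1) LN, R s' := by
      intro j hj
      obtain ⟨x, hxF, hxj⟩ := Finset.mem_image.1 hj
      have hxmem := Finset.mem_filter.1 hxF
      have hIH := ih (u+1) j (by omega)
      rw [hr'eq] at hIH
      rw [hfiber j hj]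
      exact hIH ⟨x, Finset.mem_filter.2 ⟨hxmem.1, (mem_dyI hr'pos).2 hxj⟩⟩
    rw [hsum, Finset.sum_congr rfl hD, Finset.sum_const, smul_eq_mul, himgcard,
      Finset.prod_eq_prod_Ico_succ_bot hult]


/-- **Lemma (uniform entropy lower bound on all pieces).**
Let `δ = 2^{−ℓmN}`, let `A′` be an `(m, ℓN)`-uniform `δ`-set with branching numbers
`R`, let `B″` be a non-empty `δ`-set, and let `μ = μ_{A′} × μ_{B″}` be the product of
the normalised counting measures. Let `𝒥 = {s,…,t} ⊂ {0,…,ℓN−1}` and let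
`Q₀` be a dyadic square of side `2^{−ms}` with `μ(Q₀) > 0`. Then for every `c ∈ [0,1]`,
`H(π_c μ^{Q₀}, 𝒟_{m|𝒥|}) ≥ log₂ R_{A′}^m(𝒥) − 1`, where
`R_{A′}^m(𝒥) = Π_{s′ ∈ 𝒥} R_{A′}^m(s′)`. -/
theorem lemma6 (ℓ m N : ℕ) (δ : ℝ) (hδ : δ = (2:ℝ) ^ (-(ℓ * m * N : ℤ)))
    (A' B'' : Finset ℝ)
    (hA' : (A' : Set ℝ) ⊆ lat δ ∩ Set.Ico 0 1)
    (hB'' : (B'' : Set ℝ) ⊆ lat δ ∩ Set.Ico 0 1) (hB''ne : B''.Nonempty)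
    (R : ℕ → ℕ) (hu : uniform m (ℓ * N) (A' : Set ℝ) R)
    (s t : ℕ) (hst : s ≤ t) (ht : t < ℓ * N)
    (k₁ k₂ : ℤ)
    (hQ₀ : 0 < ((cntM A').prod (cntM B''))
        (dyI ((2:ℝ) ^ (-(m * s : ℤ))) k₁ ×ˢ dyI ((2:ℝ) ^ (-(m * s : ℤ))) k₂)) :
    ∀ c ∈ Set.Icc (0:ℝ) 1,
      Real.logb 2 (∏ s' ∈ Finset.Icc s t, (R s' : ℝ)) - 1 ≤
        dyEnt ((2:ℝ) ^ (-(m * (t - s + 1) : ℤ)))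
          (MeasureTheory.Measure.map (fun p : ℝ × ℝ => p.1 + c * p.2)
            (blowup ((2:ℝ) ^ (-(m * s : ℤ))) k₁ k₂ ((cntM A').prod (cntM B'')))) := by
  intro c hc
  set LN := ℓ * N with hLN
  set r : ℝ := (2:ℝ) ^ (-(m * s : ℤ)) with hrdef
  set ρ : ℝ := (2:ℝ) ^ (-(m * (t - s + 1) : ℤ)) with hρdef
  set r₂ : ℝ := (2:ℝ) ^ (-(m * (t + 1) : ℤ)) with hr₂def
  have hrpos : 0 < r := zpow_pos (by norm_num) _
  have hρpos : 0 < ρ := zpow_pos (by norm_num) _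
  have hr₂pos : 0 < r₂ := zpow_pos (by norm_num) _
  have hrρ : r * ρ = r₂ := by
    rw [hrdef, hρdef, hr₂def, ← zpow_add₀ (by norm_num : (2:ℝ) ≠ 0)]
    congr 1
    ring
  have hr₂cast : (2:ℝ) ^ (-((m:ℤ) * ((t+1 : ℕ) : ℤ))) = r₂ := by
    rw [hr₂def]; norm_cast
  have hlat : ∀ x ∈ A', ∃ z : ℤ, x = (2:ℝ) ^ (-(m * LN : ℤ)) * z := by
    intro x hx
    obtain ⟨z, hz⟩ := (hA' hx).1
    refine ⟨z, ?_⟩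
    rw [hz, hδ]
    have he : -((ℓ:ℤ) * m * N) = -((m:ℤ) * LN) := by rw [hLN]; push_cast; ring
    rw [he]
  have hcl := count_level m LN A' R hu hlat
  set μ := (cntM A').prod (cntM B'') with hμdef
  set A₁ := A'.filter (· ∈ dyI r k₁) with hA₁def
  set B₁ := B''.filter (· ∈ dyI r k₂) with hB₁def
  set Q : Set (ℝ × ℝ) := dyI r k₁ ×ˢ dyI r k₂ with hQdef
  have hQm : MeasurableSet Q := (measurable_dyI r k₁).prod (measurable_dyI r k₂)
  have hQcnt : cnt (A' ×ˢ B'') (· ∈ Q) = A₁.card * B₁.card := by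
    rw [cnt_eq, ← Finset.card_product]
    congr 1
    ext ⟨a, b⟩
    simp only [Finset.mem_filter, Finset.mem_product, hA₁def, hB₁def, hQdef,
      Set.mem_prod]
    tauto
  have hμQ : μ Q = ((A'.card : ℝ≥0∞) * B''.card)⁻¹ * ((A₁.card * B₁.card : ℕ) : ℝ≥0∞) := by
    rw [hμdef, cnt_prod_apply A' B'' hQm, hQcnt]
  -- positivity facts
  have hMne : A₁.card * B₁.card ≠ 0 := by
    intro h
    rw [hμQ, h] at hQ₀
    simp at hQ₀
  have hA₁ne : A₁.card ≠ 0 := fun h => hMne (by rw [h, zero_mul])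
  have hB₁ne : B₁.card ≠ 0 := fun h => hMne (by rw [h, mul_zero])
  have hA'ne : A'.card ≠ 0 := by
    intro h
    exact hA₁ne (by rw [hA₁def, Finset.card_eq_zero.1 h]; simp)
  have hB''cne : B''.card ≠ 0 := by
    intro h
    exact hB₁ne (by rw [hB₁def, Finset.card_eq_zero.1 h]; simp)
  set N₀ : ℝ≥0∞ := (A'.card : ℝ≥0∞) * B''.card with hN₀def
  set nM : ℝ≥0∞ := ((A₁.card * B₁.card : ℕ) : ℝ≥0∞) with hnMdef
  have hN₀ne : N₀ ≠ 0 := by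
    rw [hN₀def]
    simp only [ne_eq, mul_eq_zero, not_or]
    exact ⟨by exact_mod_cast hA'ne, by exact_mod_cast hB''cne⟩
  have hN₀top : N₀ ≠ ⊤ := by
    rw [hN₀def]
    exact ENNReal.mul_ne_top (ENNReal.natCast_ne_top _) (ENNReal.natCast_ne_top _)
  have hnMne : nM ≠ 0 := by rw [hnMdef]; exact_mod_cast hMne
  have hnMtop : nM ≠ ⊤ := by rw [hnMdef]; exact ENNReal.natCast_ne_top _
  have hinv : ∀ x : ℝ≥0∞, (N₀⁻¹ * nM)⁻¹ * (N₀⁻¹ * x) = nM⁻¹ * x := by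
    intro x
    rw [ENNReal.mul_inv (Or.inl (ENNReal.inv_ne_zero.2 hN₀top))
      (Or.inl (ENNReal.inv_ne_top.2 hN₀ne)), inv_inv, mul_mul_mul_comm,
      ENNReal.mul_inv_cancel hN₀ne hN₀top, one_mul]
  -- the projected blowup measure
  set T : ℝ × ℝ → ℝ × ℝ := fun p => ((p.1 - (k₁:ℝ) * r) / r, (p.2 - (k₂:ℝ) * r) / r)
    with hT0
  set π : ℝ × ℝ → ℝ := fun p => p.1 + c * p.2 with hπ0
  have hTm : Measurable T := by
    rw [hT0]
    exact ((measurable_fst.sub measurable_const).div_const r).prodMk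
      ((measurable_snd.sub measurable_const).div_const r)
  have hπm : Measurable π := by
    rw [hπ0]
    exact measurable_fst.add (measurable_snd.const_mul c)
  set θ := Measure.map π (blowup r k₁ k₂ μ) with hθdef
  have hθ : ∀ E : Set ℝ, MeasurableSet E →
      θ E = nM⁻¹ * (cnt (A₁ ×ˢ B₁) (fun ab => π (T ab) ∈ E) : ℕ) := by
    intro E hE
    rw [hθdef]
    unfold blowup
    rw [← hT0, ← hQdef, Measure.map_map hπm hTm,
      Measure.map_apply (hπm.comp hTm) hE, Measure.smul_apply, smul_eq_mul,
      Measure.restrict_apply ((hπm.comp hTm) hE),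
      hμdef, cnt_prod_apply A' B'' (((hπm.comp hTm) hE).inter hQm)]
    rw [← hμdef, hμQ]
    have hcnteq : cnt (A' ×ˢ B'') (· ∈ (π ∘ T) ⁻¹' E ∩ Q)
        = cnt (A₁ ×ˢ B₁) (fun ab => π (T ab) ∈ E) := by
      rw [cnt_eq, cnt_eq]
      congr 1
      ext ⟨a, b⟩
      simp only [Finset.mem_filter, Finset.mem_product, hA₁def, hB₁def, hQdef,
        Set.mem_inter_iff, Set.mem_preimage, Function.comp_apply, Set.mem_prod]
      tauto
    rw [hcnteq, hinv]
  have hθuniv : θ Set.univ = 1 := by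
    rw [hθ Set.univ MeasurableSet.univ]
    have : cnt (A₁ ×ˢ B₁) (fun ab => π (T ab) ∈ Set.univ) = A₁.card * B₁.card := by
      rw [cnt_eq]
      simp [Finset.card_product]
    rw [this, ← hnMdef, ENNReal.inv_mul_cancel hnMne hnMtop]
  -- branching cardinalities
  have hA₁card : A₁.card = ∏ s' ∈ Finset.Ico s LN, R s' := by
    have h := hcl (LN - s) s k₁ (by omega)
    rw [← hrdef, ← hA₁def] at h
    exact h (Finset.card_pos.1 (Nat.pos_of_ne_zero hA₁ne))
  set P : ℕ := ∏ s' ∈ Finset.Icc s t, R s' with hPdef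
  set D : ℕ := ∏ s' ∈ Finset.Ico (t+1) LN, R s' with hDdef
  have hPD : A₁.card = P * D := by
    rw [hA₁card, ← Finset.prod_Ico_consecutive R (show s ≤ t+1 by omega)
      (show t+1 ≤ LN by omega), hPdef, hDdef, Finset.Ico_add_one_right_eq_Icc]
  have hPne : P ≠ 0 := by
    intro h
    rw [h, zero_mul] at hPD
    exact hA₁ne hPD
  -- the per-interval bound at level t+1
  have hbound : ∀ j : ℤ, (A₁.filter (fun a => a ∈ dyI r₂ j)).card ≤ D := by
    intro j
    rcases Finset.eq_empty_or_nonempty (A₁.filter (fun a => a ∈ dyI r₂ j)) with he | hne2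
    · rw [he]; simp
    · obtain ⟨x, hx⟩ := hne2
      have hxm := Finset.mem_filter.1 hx
      have hxA := Finset.mem_filter.1 hxm.1
      have hqr : r = ((2 ^ (m * (t+1-s)) : ℕ) : ℝ) * r₂ := by
        push_cast
        rw [hrdef, hr₂def, ← zpow_natCast (2:ℝ), ← zpow_add₀ (by norm_num : (2:ℝ) ≠ 0)]
        congr 1
        have hcc : ((m * (t + 1 - s) : ℕ) : ℤ) = (m:ℤ) * ((t:ℤ) + 1 - s) := by
          push_cast [Nat.cast_sub (by omega : s ≤ t + 1)]
          ring
        rw [hcc]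
        ring
      have hsub3 : dyI r₂ j ⊆ dyI r k₁ := by
        rw [hqr]
        refine dyI_subset_s12 (by positivity) hr₂pos ⟨x, hxm.2, ?_⟩
        rw [← hqr]
        exact hxA.2
      have heqA : A₁.filter (fun a => a ∈ dyI r₂ j) = A'.filter (· ∈ dyI r₂ j) := by
        ext a
        simp only [hA₁def, Finset.mem_filter, and_assoc]
        exact ⟨fun ⟨h1, _, h3⟩ => ⟨h1, h3⟩, fun ⟨h1, h3⟩ => ⟨h1, hsub3 h3, h3⟩⟩
      rw [heqA]
      have hclt := hcl (LN - (t+1)) (t+1) j (by omega)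
      rw [hr₂cast] at hclt
      rw [hclt ⟨x, Finset.mem_filter.2 ⟨hxA.1, hxm.2⟩⟩, hDdef]
  -- per-fibre counting bound
  have hkey : ∀ (kk : ℤ) (b : ℝ), b ∈ B₁ →
      (A₁.filter (fun a => π (T (a, b)) ∈ dyI ρ kk)).card ≤ 2 * D := by
    intro kk b _
    set w : ℝ := c * ((b - (k₂:ℝ) * r) / r) with hwdef
    set L : ℝ := ((kk:ℝ) * ρ - w) * r + (k₁:ℝ) * r with hLdef
    set j₀ : ℤ := ⌊L / r₂⌋ with hj₀def
    have hsub2 : (A₁.filter (fun a => π (T (a, b)) ∈ dyI ρ kk)) ⊆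
        A₁.filter (fun a => a ∈ dyI r₂ j₀) ∪ A₁.filter (fun a => a ∈ dyI r₂ (j₀ + 1)) := by
      intro a ha
      have hmm := Finset.mem_filter.1 ha
      have hcond : π (T (a, b)) ∈ dyI ρ kk := hmm.2
      rw [dyI, Set.mem_Ico] at hcond
      have hπT : π (T (a, b)) = (a - (k₁:ℝ) * r) / r + w := by
        rw [hπ0, hT0, hwdef]
      rw [hπT] at hcond
      have haL : L ≤ a ∧ a < L + r₂ := by
        have h1 : ((kk:ℝ) * ρ - w) * r ≤ a - (k₁:ℝ) * r := by
          rw [← le_div_iff₀ hrpos]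
          linarith [hcond.1]
        have h2 : a - (k₁:ℝ) * r < (((kk:ℝ) + 1) * ρ - w) * r := by
          rw [← div_lt_iff₀ hrpos]
          linarith [hcond.2]
        rw [← hrρ, hLdef]
        constructor
        · linarith
        · nlinarith
      have hfl1 : j₀ ≤ ⌊a / r₂⌋ := by
        rw [hj₀def]
        exact Int.floor_le_floor (by gcongr; exact haL.1)
      have hfl2 : ⌊a / r₂⌋ ≤ j₀ + 1 := by
        have hfa : (⌊a / r₂⌋ : ℝ) ≤ a / r₂ := Int.floor_le _
        have hlf : L / r₂ < (j₀ : ℝ) + 1 := by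
          rw [hj₀def]
          exact Int.lt_floor_add_one _
        have hdiv : a / r₂ < L / r₂ + 1 := by
          rw [div_lt_iff₀ hr₂pos, add_mul, one_mul, div_mul_cancel₀ _ hr₂pos.ne']
          exact haL.2
        have : (⌊a / r₂⌋ : ℝ) < (j₀ : ℝ) + 2 := by linarith
        have : ⌊a / r₂⌋ < j₀ + 2 := by exact_mod_cast this
        omega
      have hmem2 : a ∈ dyI r₂ j₀ ∨ a ∈ dyI r₂ (j₀ + 1) := by
        rcases (by omega : ⌊a / r₂⌋ = j₀ ∨ ⌊a / r₂⌋ = j₀ + 1) with h | h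
        · exact Or.inl ((mem_dyI hr₂pos).2 h)
        · exact Or.inr ((mem_dyI hr₂pos).2 h)
      rcases hmem2 with h | h
      · exact Finset.mem_union_left _ (Finset.mem_filter.2 ⟨hmm.1, h⟩)
      · exact Finset.mem_union_right _ (Finset.mem_filter.2 ⟨hmm.1, h⟩)
    calc (A₁.filter (fun a => π (T (a, b)) ∈ dyI ρ kk)).card
        ≤ (A₁.filter (fun a => a ∈ dyI r₂ j₀) ∪
            A₁.filter (fun a => a ∈ dyI r₂ (j₀ + 1))).card := Finset.card_le_card hsub2
      _ ≤ (A₁.filter (fun a => a ∈ dyI r₂ j₀)).card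
          + (A₁.filter (fun a => a ∈ dyI r₂ (j₀ + 1))).card := Finset.card_union_le _ _
      _ ≤ 2 * D := by
          have := hbound j₀
          have := hbound (j₀ + 1)
          omega
  -- counting bound on each dyadic interval of the projected measure
  set n : ℤ → ℕ := fun kk => cnt (A₁ ×ˢ B₁) (fun ab => π (T ab) ∈ dyI ρ kk) with hndef
  have hnP : ∀ kk : ℤ, n kk * P ≤ 2 * (A₁.card * B₁.card) := by
    intro kk
    have h1 : n kk = ∑ b ∈ B₁, cnt A₁ (fun a => π (T (a, b)) ∈ dyI ρ kk) := by
      rw [hndef]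
      exact cnt_prod_right _ _ _
    have h2 : n kk ≤ B₁.card * (2 * D) := by
      rw [h1]
      calc ∑ b ∈ B₁, cnt A₁ (fun a => π (T (a, b)) ∈ dyI ρ kk)
          ≤ ∑ _b ∈ B₁, 2 * D := Finset.sum_le_sum fun b hb => by
            rw [cnt_eq]; exact hkey kk b hb
        _ = B₁.card * (2 * D) := by rw [Finset.sum_const, smul_eq_mul]
    calc n kk * P ≤ (B₁.card * (2 * D)) * P := Nat.mul_le_mul_right _ h2
      _ = 2 * ((P * D) * B₁.card) := by ring
      _ = 2 * (A₁.card * B₁.card) := by rw [← hPD]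
  -- the masses of the dyadic intervals
  have hθk : ∀ kk : ℤ, θ (dyI ρ kk) = nM⁻¹ * (n kk : ℝ≥0∞) := by
    intro kk
    rw [hθ (dyI ρ kk) (measurable_dyI ρ kk), hndef]
  set f : ℤ → ℝ := fun kk => (θ (dyI ρ kk)).toReal with hfdef
  set Mr : ℝ := ((A₁.card * B₁.card : ℕ) : ℝ) with hMrdef
  have hMrpos : 0 < Mr := by
    rw [hMrdef]
    exact_mod_cast Nat.pos_of_ne_zero hMne
  have hfval : ∀ kk : ℤ, f kk = (n kk : ℝ) / Mr := by
    intro kk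
    rw [hfdef]
    simp only [hθk kk]
    rw [ENNReal.toReal_mul, ENNReal.toReal_inv, hnMdef, ENNReal.toReal_natCast,
      ENNReal.toReal_natCast, hMrdef]
    rw [div_eq_inv_mul]
  have hfnonneg : ∀ kk : ℤ, 0 ≤ f kk := fun kk => ENNReal.toReal_nonneg
  -- total mass one
  have hdisj : Pairwise (Function.onFun Disjoint fun k : ℤ => dyI ρ k) := by
    intro k k' hkk'
    refine Set.disjoint_left.2 fun x hx hx' => hkk' ?_
    rw [← (mem_dyI hρpos).1 hx, ← (mem_dyI hρpos).1 hx']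
  have hcover : (⋃ k : ℤ, dyI ρ k) = Set.univ := by
    ext x
    simp only [Set.mem_iUnion, Set.mem_univ, iff_true]
    exact ⟨⌊x / ρ⌋, (mem_dyI hρpos).2 rfl⟩
  have htsum1 : (∑' k : ℤ, θ (dyI ρ k)) = 1 := by
    rw [← measure_iUnion hdisj (fun k => measurable_dyI ρ k), hcover, hθuniv]
  have hftsum : (∑' k : ℤ, f k) = 1 := by
    have h := ENNReal.tsum_toReal_eq (f := fun k : ℤ => θ (dyI ρ k))
      (fun k => by
        simp only [hθk k]
        exact ENNReal.mul_ne_top (ENNReal.inv_ne_top.2 hnMne) (ENNReal.natCast_ne_top _))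
    rw [htsum1] at h
    rw [hfdef, ← h]
    simp
  have hfsummable : Summable f := by
    rw [hfdef]
    exact ENNReal.summable_toReal (by rw [htsum1]; exact ENNReal.one_ne_top)
  -- support is finite
  set F₀ : Finset ℤ := (A₁ ×ˢ B₁).image (fun ab => ⌊π (T ab) / ρ⌋) with hF₀def
  have hsupp : ∀ kk : ℤ, kk ∉ F₀ → f kk = 0 := by
    intro kk hk
    have hn0 : n kk = 0 := by
      show cnt (A₁ ×ˢ B₁) (fun ab => π (T ab) ∈ dyI ρ kk) = 0
      rw [cnt_eq, Finset.card_eq_zero, ← Finset.not_nonempty_iff_eq_empty]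
      rintro ⟨ab, hab⟩
      have h := Finset.mem_filter.1 hab
      exact hk (Finset.mem_image.2 ⟨ab, h.1, (mem_dyI hρpos).1 h.2⟩)
    rw [hfval, hn0]
    simp
  -- entropy estimate
  have hPcast : ((P:ℕ) : ℝ) = ∏ s' ∈ Finset.Icc s t, (R s' : ℝ) := by
    rw [hPdef]
    push_cast
    rfl
  have hPRpos : (0:ℝ) < (P:ℝ) := by exact_mod_cast Nat.pos_of_ne_zero hPne
  have hterm : ∀ kk : ℤ, f kk * (Real.logb 2 (P:ℝ) - 1)
      ≤ f kk * Real.logb 2 (1 / f kk) := by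
    intro kk
    rcases eq_or_ne (f kk) 0 with h0 | h0
    · rw [h0]; simp
    · have hfpos : 0 < f kk := lt_of_le_of_ne (hfnonneg kk) (Ne.symm h0)
      refine mul_le_mul_of_nonneg_left ?_ (hfnonneg kk)
      have hfle : f kk ≤ 2 / (P:ℝ) := by
        rw [hfval, div_le_div_iff₀ hMrpos hPRpos]
        have := hnP kk
        have hcast : ((n kk : ℝ)) * (P:ℝ) ≤ 2 * Mr := by
          rw [hMrdef]
          exact_mod_cast this
        linarith
      have h12 : (P:ℝ) / 2 ≤ 1 / f kk := by
        rw [div_le_div_iff₀ (by norm_num : (0:ℝ) < 2) hfpos]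
        have h' : f kk * (P:ℝ) ≤ 2 := by
          rw [le_div_iff₀ hPRpos] at hfle
          linarith
        nlinarith
      calc Real.logb 2 (P:ℝ) - 1 = Real.logb 2 ((P:ℝ) / 2) := by
            rw [Real.logb_div (ne_of_gt hPRpos) (by norm_num),
              Real.logb_self_eq_one (by norm_num)]
        _ ≤ Real.logb 2 (1 / f kk) :=
            Real.logb_le_logb_of_le (by norm_num) (by positivity) h12
  have hsummable2 : Summable (fun kk : ℤ => f kk * Real.logb 2 (1 / f kk)) := by
    refine summable_of_ne_finset_zero (s := F₀) fun kk hk => ?_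
    rw [hsupp kk hk]
    simp
  rw [← hPcast, dyEnt]
  calc Real.logb 2 ((P:ℕ):ℝ) - 1
      = (∑' kk : ℤ, f kk) * (Real.logb 2 ((P:ℕ):ℝ) - 1) := by rw [hftsum, one_mul]
    _ = ∑' kk : ℤ, f kk * (Real.logb 2 ((P:ℕ):ℝ) - 1) := tsum_mul_right.symm
    _ ≤ ∑' kk : ℤ, f kk * Real.logb 2 (1 / f kk) :=
        Summable.tsum_le_tsum hterm (hfsummable.mul_right _) hsummable2
    _ = ∑' kk : ℤ, (θ (dyI ρ kk)).toReal * Real.logb 2 (1 / (θ (dyI ρ kk)).toReal) := by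
        rw [hfdef]
end

section
/- Let δ ∈ 2^{−ℕ}, let B ⊂ (δ·ℤ) ∩ [0,1] be non-empty, and let n ∈ ℕ with n ≥ 1. Write kB for the k-fold sumset B + … + B. Then there exists k with 1 ≤ k ≤ n such that |2^{k}B + 2^{k}B| = |2^{k+1}B| ≤ 2·δ^{−1/n}·|2^{k}B|. -/
open MeasureTheory Set Pointwise

/-- The `k`-fold sumset `kB = B + … + B` (with the convention `0·B = {0}`). -/
def kfold (B : Set ℝ) : ℕ → Set ℝ
  | 0 => {0}
  | (k + 1) => kfold B k + B

lemma kfold_add (B : Set ℝ) (a b : ℕ) : kfold B (a + b) = kfold B a + kfold B b := by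
  induction b with
  | zero => simp [kfold, add_comm, Set.singleton_zero]
  | succ b ih => rw [← add_assoc, kfold, kfold, ih, add_assoc]

lemma kfold_one (B : Set ℝ) : kfold B 1 = B := by
  show kfold B 0 + B = B
  simp [kfold, Set.singleton_zero]

lemma kfold_nonempty (B : Set ℝ) (hBne : B.Nonempty) (m : ℕ) : (kfold B m).Nonempty := by
  induction m with
  | zero => exact ⟨0, rfl⟩
  | succ m ih => exact ih.add hBne

lemma kfold_subset {δ : ℝ} {B : Set ℝ} (hB : B ⊆ lat δ ∩ Set.Icc 0 1) (m : ℕ) :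
    kfold B m ⊆ lat δ ∩ Set.Icc 0 (m : ℝ) := by
  induction m with
  | zero =>
    rintro x rfl
    exact ⟨⟨0, by simp⟩, by simp⟩
  | succ m ih =>
    rintro x ⟨y, hy, b, hb, rfl⟩
    obtain ⟨⟨zy, hzy⟩, hy0, hy1⟩ := ih hy
    obtain ⟨⟨zb, hzb⟩, hb0, hb1⟩ := hB hb
    refine ⟨⟨zy + zb, by push_cast [hzy, hzb]; ring⟩, by positivity, ?_⟩
    push_cast
    linarith

lemma lat_inter_finite_s13 {j : ℕ} {m : ℕ} :
    (lat ((2:ℝ) ^ (-(j:ℤ))) ∩ Set.Icc 0 (m : ℝ)).Finite ∧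
    (lat ((2:ℝ) ^ (-(j:ℤ))) ∩ Set.Icc 0 (m : ℝ)).ncard ≤ m * 2 ^ j + 1 := by
  set δ : ℝ := (2:ℝ) ^ (-(j:ℤ)) with hδdef
  have hδpos : 0 < δ := by positivity
  have hδinv : δ⁻¹ = (2:ℝ) ^ (j:ℕ) := by
    rw [hδdef, ← zpow_natCast (2:ℝ) j, ← zpow_neg, neg_neg]
  have hsub : lat δ ∩ Set.Icc 0 (m : ℝ) ⊆
      (fun z : ℤ => δ * (z : ℝ)) '' (Set.Icc (0 : ℤ) (m * 2 ^ j)) := by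
    rintro x ⟨⟨z, rfl⟩, h0, h1⟩
    refine ⟨z, ⟨?_, ?_⟩, rfl⟩
    · by_contra hlt
      push_neg at hlt
      have : (z : ℝ) < 0 := by exact_mod_cast hlt
      nlinarith
    · have hz : (z : ℝ) ≤ (m : ℝ) * 2 ^ j := by
        have := mul_le_mul_of_nonneg_left h1 (le_of_lt (inv_pos.mpr hδpos))
        rw [inv_mul_cancel_left₀ (ne_of_gt hδpos)] at this
        calc (z:ℝ) ≤ δ⁻¹ * m := this
        _ = (m:ℝ) * 2 ^ j := by rw [hδinv]; ring
      exact_mod_cast hz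
  have hfin : (Set.Icc (0 : ℤ) (m * 2 ^ j)).Finite := Set.finite_Icc _ _
  constructor
  · exact (hfin.image _).subset hsub
  · calc (lat δ ∩ Set.Icc 0 (m : ℝ)).ncard
        ≤ ((fun z : ℤ => δ * (z : ℝ)) '' (Set.Icc (0 : ℤ) (m * 2 ^ j))).ncard :=
          Set.ncard_le_ncard hsub (hfin.image _)
      _ ≤ (Set.Icc (0 : ℤ) (m * 2 ^ j)).ncard := Set.ncard_image_le hfin
      _ ≤ m * 2 ^ j + 1 := by
          rw [← Finset.coe_Icc, Set.ncard_coe_finset, Int.card_Icc]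
          have : ((m : ℤ) * 2 ^ j + 1 - 0) = ((m * 2 ^ j + 1 : ℕ) : ℤ) := by push_cast; ring
          rw [this, Int.toNat_natCast]

lemma kfold_singleton (b : ℝ) (m : ℕ) : kfold {b} m = {(m : ℝ) * b} := by
  induction m with
  | zero => simp [kfold]
  | succ m ih =>
    show kfold {b} m + {b} = _
    rw [ih, Set.singleton_add_singleton]
    push_cast
    ring_nf


/-- **Lemma (finding a sumset with small doubling).**
Let `δ ∈ 2^{−ℕ}`, let `B ⊂ (δ·ℤ) ∩ [0,1]` be non-empty, and `n ≥ 1`. Then there is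
`1 ≤ k ≤ n` such that `|2^k B + 2^k B| = |2^{k+1} B| ≤ 2·δ^{−1/n}·|2^k B|`. -/
theorem smallDoublingIterate (δ : ℝ) (hδ : ∃ j : ℕ, δ = (2:ℝ) ^ (-(j:ℤ)))
    (B : Set ℝ) (hB : B ⊆ lat δ ∩ Set.Icc 0 1) (hBne : B.Nonempty)
    (n : ℕ) (hn : 1 ≤ n) :
    ∃ k : ℕ, 1 ≤ k ∧ k ≤ n ∧
      (kfold B (2 ^ k) + kfold B (2 ^ k)).ncard = (kfold B (2 ^ (k + 1))).ncard ∧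
      ((kfold B (2 ^ (k + 1))).ncard : ℝ) ≤
        2 * δ ^ (-(1 / (n : ℝ))) * ((kfold B (2 ^ k)).ncard : ℝ) := by
  obtain ⟨j, hj⟩ := hδ
  have hδpos : 0 < δ := by rw [hj]; positivity
  have hδle1 : δ ≤ 1 := by
    rw [hj]
    calc (2:ℝ) ^ (-(j:ℤ)) ≤ (2:ℝ) ^ (0:ℤ) := by
          apply zpow_le_zpow_right₀ (by norm_num) (by omega)
      _ = 1 := by norm_num
  have hδinv : δ⁻¹ = (2:ℝ) ^ (j:ℕ) := by
    rw [hj, ← zpow_natCast (2:ℝ) j, ← zpow_neg, neg_neg]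
  set δ' : ℝ := δ ^ (-(1 / (n : ℝ))) with hδ'def
  have hδ'1 : 1 ≤ δ' :=
    Real.one_le_rpow_of_pos_of_le_one_of_nonpos hδpos hδle1 (neg_nonpos.mpr (by positivity))
  have hδ'pow : δ' ^ n = δ⁻¹ := by
    rw [hδ'def, ← Real.rpow_natCast (δ ^ (-(1 / (n:ℝ)))) n, ← Real.rpow_mul hδpos.le]
    have : -(1 / (n:ℝ)) * n = -1 := by
      field_simp
    rw [this, Real.rpow_neg_one]
  -- equality of sumsets
  have heq : ∀ k : ℕ, kfold B (2 ^ k) + kfold B (2 ^ k) = kfold B (2 ^ (k + 1)) := by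
    intro k
    rw [pow_succ, mul_two, kfold_add]
  -- finiteness
  have hfin : ∀ m : ℕ, (kfold B m).Finite := by
    intro m
    exact ((lat_inter_finite_s13 (j := j) (m := m)).1.subset (by rw [← hj]; exact kfold_subset hB m))
  have hcard : ∀ m : ℕ, (kfold B m).ncard ≤ m * 2 ^ j + 1 := by
    intro m
    calc (kfold B m).ncard ≤ (lat δ ∩ Set.Icc 0 (m:ℝ)).ncard :=
          Set.ncard_le_ncard (kfold_subset hB m) (by rw [hj]; exact (lat_inter_finite_s13).1)
      _ ≤ m * 2 ^ j + 1 := by rw [hj]; exact (lat_inter_finite_s13).2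
  have hpos : ∀ m : ℕ, 1 ≤ (kfold B m).ncard := by
    intro m
    exact (Set.ncard_pos (hfin m)).mpr (kfold_nonempty B hBne m)
  set c : ℕ → ℝ := fun k => ((kfold B (2 ^ k)).ncard : ℝ) with hc
  by_contra hcon
  push_neg at hcon
  have H : ∀ k : ℕ, 1 ≤ k → k ≤ n → 2 * δ' * c k < c (k + 1) := by
    intro k h1 h2
    have := hcon k h1 h2 (by rw [heq])
    exact this
  have hcpos : ∀ k : ℕ, 1 ≤ c k := by
    intro k
    have := hpos (2 ^ k)
    simp only [hc]
    exact_mod_cast this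
  -- the chain
  have chain : ∀ i : ℕ, i ≤ n → (2 * δ') ^ i * c 1 ≤ c (i + 1) := by
    intro i
    induction i with
    | zero => simp
    | succ i ih =>
      intro h
      have h1 : i ≤ n := by omega
      calc (2 * δ') ^ (i + 1) * c 1 = (2 * δ') * ((2 * δ') ^ i * c 1) := by ring
        _ ≤ (2 * δ') * c (i + 1) := by
            apply mul_le_mul_of_nonneg_left (ih h1)
            positivity
        _ ≤ c (i + 2) := le_of_lt (by have := H (i + 1) (by omega) h; linarith)
  -- lower bound on c 1
  have hB2 : kfold B 2 = B + B := by
    have : (2 : ℕ) = 1 + 1 := rfl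
    rw [this, kfold_add, kfold_one]
  have key : ∀ x y : ℝ, x ∈ B → y ∈ B → x < y → 3 ≤ c 1 := by
    intro x y hx hy hxy
    have hsub3 : ({x + x, x + y, y + y} : Set ℝ) ⊆ kfold B (2 ^ 1) := by
      rw [show (2:ℕ)^1 = 2 from rfl, hB2]
      rintro z (rfl | rfl | rfl)
      exacts [⟨x, hx, x, hx, rfl⟩, ⟨x, hx, y, hy, rfl⟩, ⟨y, hy, y, hy, rfl⟩]
    have h3 : ({x + x, x + y, y + y} : Set ℝ).ncard = 3 := by
      rw [Set.ncard_eq_three]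
      exact ⟨_, _, _, by intro h; linarith, by intro h; linarith, by intro h; linarith, rfl⟩
    have := Set.ncard_le_ncard hsub3 (hfin _)
    rw [h3] at this
    simp only [hc]
    exact_mod_cast this
  have hc1 : 3 ≤ c 1 ∨ c 1 = 1 ∧ c 2 = 1 := by
    by_cases hsing : ∃ b, B = {b}
    · right
      obtain ⟨b, rfl⟩ := hsing
      constructor <;> simp [hc, kfold_singleton]
    · left
      obtain ⟨b1, hb1⟩ := hBne
      have : ∃ b2 ∈ B, b2 ≠ b1 := by
        by_contra hno
        push_neg at hno
        exact hsing ⟨b1, Set.eq_singleton_iff_unique_mem.mpr ⟨hb1, hno⟩⟩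
      obtain ⟨b2, hb2, hne⟩ := this
      rcases hne.lt_or_gt with hlt | hlt
      · exact key b2 b1 hb2 hb1 hlt
      · exact key b1 b2 hb1 hb2 hlt
  -- final contradiction
  have hup : c (n + 1) ≤ 2 * 2 ^ n * 2 ^ j + 1 := by
    have := hcard (2 ^ (n + 1))
    simp only [hc]
    calc ((kfold B (2 ^ (n + 1))).ncard : ℝ) ≤ ((2 ^ (n + 1) * 2 ^ j + 1 : ℕ) : ℝ) := by
          exact_mod_cast this
      _ = 2 * 2 ^ n * 2 ^ j + 1 := by push_cast; ring
  have hlow : (2:ℝ) ^ n * 2 ^ j * c 1 ≤ c (n + 1) := by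
    have := chain n le_rfl
    rw [mul_pow, hδ'pow, hδinv] at this
    exact_mod_cast this
  have hP : (2:ℝ) ≤ 2 ^ n := by
    calc (2:ℝ) = 2 ^ 1 := (pow_one 2).symm
      _ ≤ 2 ^ n := by apply pow_le_pow_right₀ (by norm_num) hn
  have hQ : (1:ℝ) ≤ 2 ^ j := one_le_pow₀ (by norm_num)
  rcases hc1 with h3 | ⟨h1, h2⟩
  · nlinarith [hlow, hup, mul_le_mul_of_nonneg_left h3 (by positivity : (0:ℝ) ≤ 2 ^ n * 2 ^ j)]
  · have := H 1 le_rfl hn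
    rw [h1, h2] at this
    linarith
end
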